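/- arXiv:2301.02168 — 4 statements merged into one kernel-verified Lean document; each statement's English description precedes it below -/
import Mathlib

section
/- Suppose in addition that v is convex and that a₃·(1 + (1/2)^q)·√(d/n) ≤ 3. Then Assumption 3 holds with c₀ = 1/8; that is, (1/8)·√(d/n)·∥x − m*∥_{H_v} ≤ v(x) − v(m*) for all x with ∥x − m*∥_{H_v} ≥ (1/2)·√(d/n). -/
open MeasureTheory Real Set
open scoped Classical

noncomputable section

abbrev Euc (d : ℕ) := EuclideanSpace ℝ (Fin d)

/-- Symmetric PSD square root of a matrix (zero if not PSD). -/
def matSqrt {d : ℕ} (M : Matrix (Fin d) (Fin d) ℝ) : Matrix (Fin d) (Fin d) ℝ :=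
  if h : M.PosSemidef then
    (h.1.eigenvectorUnitary : Matrix (Fin d) (Fin d) ℝ) * Matrix.diagonal (Real.sqrt ∘ h.1.eigenvalues) *
      (star h.1.eigenvectorUnitary : Matrix (Fin d) (Fin d) ℝ)
  else 0

/-- Operator norm of a matrix acting on Euclidean space. -/
def matOpNorm {d : ℕ} (M : Matrix (Fin d) (Fin d) ℝ) : ℝ :=
  ‖LinearMap.toContinuousLinearMap (Matrix.toEuclideanLin M)‖

/-- `H`-weighted norm `√(xᵀ H x)`. -/
def normH {d : ℕ} (H : Matrix (Fin d) (Fin d) ℝ) (x : Euc d) : ℝ :=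
  Real.sqrt (inner ℝ x (Matrix.toEuclideanLin H x) : ℝ)

/-- Standard Gaussian measure on `ℝ^d`. -/
def stdGaussian (d : ℕ) : Measure (Euc d) :=
  volume.withDensity fun x => ENNReal.ofReal ((2 * π) ^ (-(d : ℝ) / 2) * Real.exp (-‖x‖ ^ 2 / 2))

/-- Gaussian measure `N(m, S)`, defined as the pushforward of the standard Gaussian
by `z ↦ m + S^{1/2} z`. -/
def gaussN {d : ℕ} (m : Euc d) (S : Matrix (Fin d) (Fin d) ℝ) : Measure (Euc d) :=
  (stdGaussian d).map fun z => m + Matrix.toEuclideanLin (matSqrt S) z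

/-- Normalization of a measure to a probability measure. -/
def normalized {α : Type*} [MeasurableSpace α] (μ : Measure α) : Measure α :=
  (μ Set.univ)⁻¹ • μ

/-- Posterior measure `π ∝ e^{-n v}` on `ℝ^d`. -/
def post (d n : ℕ) (v : Euc d → ℝ) : Measure (Euc d) :=
  normalized (volume.withDensity fun x => ENNReal.ofReal (Real.exp (-(n : ℝ) * v x)))

/-- Hessian matrix of `f` at `x`. -/
def hess {d : ℕ} (f : Euc d → ℝ) (x : Euc d) : Matrix (Fin d) (Fin d) ℝ :=
  fun i j => iteratedFDeriv ℝ 2 f x ![EuclideanSpace.single i 1, EuclideanSpace.single j 1]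

/-- Assumption 1: `mstar` is the unique global minimizer of `v` and the Hessian there
is positive definite. -/
def Assumption1 {d : ℕ} (v : Euc d → ℝ) (mstar : Euc d) : Prop :=
  (∀ x, x ≠ mstar → v mstar < v x) ∧ (hess v mstar).PosDef

/-- Assumption 2: polynomial growth of the `H_v`-weighted third and fourth derivatives,
plus the smallness condition `a₃ d/√n + a₄ d²/n ≤ 1`. -/
def Assumption2 {d : ℕ} (n : ℕ) (v : Euc d → ℝ) (mstar : Euc d) (q a₃ a₄ : ℝ) : Prop :=
  (∀ k ∈ ({3, 4} : Set ℕ), ∀ x u : Euc d, normH (hess v mstar) u = 1 →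
    iteratedFDeriv ℝ k v x (fun _ => u) ≤ (if k = 3 then a₃ else a₄) *
      (max 1 (Real.sqrt ((n : ℝ) / d) * normH (hess v mstar) (x - mstar))) ^ q) ∧
  a₃ * d / Real.sqrt n + a₄ * d ^ 2 / n ≤ 1

/-- Assumption 3: linear growth of `v` away from the minimizer. -/
def Assumption3 {d : ℕ} (n : ℕ) (v : Euc d → ℝ) (mstar : Euc d) (c₀ : ℝ) : Prop :=
  ∀ x : Euc d, (1 / 2) * Real.sqrt ((d : ℝ) / n) ≤ normH (hess v mstar) (x - mstar) →
    c₀ * Real.sqrt ((d : ℝ) / n) * normH (hess v mstar) (x - mstar) ≤ v x - v mstar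

/-- Membership in the region `R_V`. -/
def inRV {d : ℕ} (n : ℕ) (v : Euc d → ℝ) (mstar : Euc d)
    (m : Euc d) (S : Matrix (Fin d) (Fin d) ℝ) : Prop :=
  S.PosDef ∧ ((2 : ℝ) • ((n : ℝ) • hess v mstar)⁻¹ - S).PosSemidef ∧
    matOpNorm (matSqrt ((n : ℝ) • hess v mstar) * matSqrt S) ^ 2
      + ‖Matrix.toEuclideanLin (matSqrt ((n : ℝ) • hess v mstar)) (m - mstar)‖ ^ 2 ≤ 8

/-- First-order optimality equations for Gaussian VI:
`E[∇V(m + S^{1/2}Z)] = 0` and `E[∇²V(m + S^{1/2}Z)] = S⁻¹`, with `V = n v`. -/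
def optEqs {d : ℕ} (n : ℕ) (v : Euc d → ℝ) (m : Euc d) (S : Matrix (Fin d) (Fin d) ℝ) : Prop :=
  (∫ z, gradient (fun x => (n : ℝ) * v x) (m + Matrix.toEuclideanLin (matSqrt S) z)
      ∂(stdGaussian d)) = 0 ∧
  ∀ i j, (∫ z, hess (fun x => (n : ℝ) * v x) (m + Matrix.toEuclideanLin (matSqrt S) z) i j
      ∂(stdGaussian d)) = S⁻¹ i j

/-- Condition (G) on the test function `g`. -/
def condG {d : ℕ} (c₀ Rg : ℝ) (mhat : Euc d) (Shat : Matrix (Fin d) (Fin d) ℝ)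
    (g : Euc d → ℝ) : Prop :=
  ∀ x : Euc d, Rg * Real.sqrt d ≤ normH Shat⁻¹ (x - mhat) →
    |g x - ∫ y, g y ∂(gaussN mhat Shat)| ≤
      Real.exp (c₀ * Real.sqrt d * normH Shat⁻¹ (x - mhat) / 4)

/-- Variance of `g` under `μ`. -/
def varG {d : ℕ} (μ : Measure (Euc d)) (g : Euc d → ℝ) : ℝ :=
  ∫ x, (g x - ∫ y, g y ∂μ) ^ 2 ∂μ

-- Auxiliary lemmas

lemma itfd_shift {d : ℕ} (v : Euc d → ℝ) (hv : ContDiff ℝ 4 v) (a : Euc d) :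
    ∀ m : ℕ, m ≤ 4 → iteratedFDeriv ℝ m (fun y => v (a + y))
      = fun x => iteratedFDeriv ℝ m v (a + x) := by
  intro m
  induction m with
  | zero =>
    intro _
    funext x; ext mm
    simp [iteratedFDeriv_zero_apply]
  | succ k IH =>
    intro hk
    funext x; ext mm
    rw [iteratedFDeriv_succ_apply_left, iteratedFDeriv_succ_apply_left, IH (by omega)]
    have hdiff : DifferentiableAt ℝ (iteratedFDeriv ℝ k v) (a + x) :=
      (hv.differentiable_iteratedFDeriv (by exact_mod_cast (by omega : k < 4))).differentiableAt
    have hcomp : (fun x => iteratedFDeriv ℝ k v (a + x))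
        = (iteratedFDeriv ℝ k v) ∘ (fun x : Euc d => a + x) := rfl
    have h1 : fderiv ℝ (fun x => iteratedFDeriv ℝ k v (a + x)) x
        = fderiv ℝ (iteratedFDeriv ℝ k v) (a + x) := by
      rw [hcomp, fderiv_comp x hdiff ((differentiable_id.const_add a) x)]
      have : fderiv ℝ (fun x : Euc d => a + x) x = ContinuousLinearMap.id ℝ (Euc d) := by
        rw [fderiv_const_add]; exact fderiv_id
      rw [this, ContinuousLinearMap.comp_id]
    rw [h1]

-- within = global for iterated derivs of smooth 1D functions
lemma idw_eq {f : ℝ → ℝ} (hf : ContDiff ℝ 4 f) {m : ℕ} (hm : m ≤ 4) {s : Set ℝ}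
    (hs : UniqueDiffOn ℝ s) {x : ℝ} (hx : x ∈ s) :
    iteratedDerivWithin m f s x = iteratedDeriv m f x := by
  rw [iteratedDerivWithin_eq_iteratedFDerivWithin, iteratedDeriv_eq_iteratedFDeriv]
  congr 1
  have hf' : ContDiff ℝ (4 : ℕ∞) f := by exact_mod_cast hf
  have h := contDiff_iff_ftaylorSeries.mp hf'
  exact (((hasFTaylorSeriesUpToOn_univ_iff.mpr h).mono (Set.subset_univ s)).eq_iteratedFDerivWithin_of_uniqueDiffOn
    (by exact_mod_cast hm) hs hx).symm

-- derivative along a line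
lemma line_deriv {d : ℕ} (v : Euc d → ℝ) (hv : ContDiff ℝ 4 v) (a w : Euc d)
    {m : ℕ} (hm : m ≤ 4) (t : ℝ) :
    iteratedDeriv m (fun s : ℝ => v (a + s • w)) t
      = iteratedFDeriv ℝ m v (a + t • w) (fun _ => w) := by
  have hg : ContDiff ℝ 4 (fun y => v (a + y)) := hv.comp (contDiff_const.add contDiff_id)
  have hrepr : (fun s : ℝ => v (a + s • w))
      = (fun y => v (a + y)) ∘ (ContinuousLinearMap.toSpanSingleton ℝ w) := by
    funext s; simp [ContinuousLinearMap.toSpanSingleton_apply]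
  rw [iteratedDeriv_eq_iteratedFDeriv, hrepr,
    (ContinuousLinearMap.toSpanSingleton ℝ w).iteratedFDeriv_comp_right hg t
      (by exact_mod_cast hm)]
  simp only [ContinuousMultilinearMap.compContinuousLinearMap_apply,
    ContinuousLinearMap.toSpanSingleton_apply, one_smul]
  rw [congrFun (itfd_shift v hv a m hm) (t • w)]


lemma inner_toEuclideanLin {d : ℕ} (H : Matrix (Fin d) (Fin d) ℝ) (x y : Euc d) :
    (inner ℝ x (Matrix.toEuclideanLin H y) : ℝ) = ∑ i, ∑ j, x i * H i j * y j := by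
  simp only [PiLp.inner_apply, RCLike.inner_apply, conj_trivial,
    Matrix.toEuclideanLin_apply]
  refine Finset.sum_congr rfl fun i _ => ?_
  have : (WithLp.equiv 2 (Fin d → ℝ)).symm (Matrix.mulVec H ((WithLp.equiv 2 (Fin d → ℝ)) y)) i
      = Matrix.mulVec H (fun j => y j) i := rfl
  simp [Matrix.mulVec, dotProduct, Finset.mul_sum, mul_assoc]
  rw [Finset.sum_mul]; exact Finset.sum_congr rfl fun _ _ => by ring

lemma quad_eq {d : ℕ} (v : Euc d → ℝ) (mstar : Euc d) (w : Euc d) :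
    (inner ℝ w (Matrix.toEuclideanLin (hess v mstar) w) : ℝ)
      = iteratedFDeriv ℝ 2 v mstar (fun _ => w) := by
  classical
  rw [inner_toEuclideanLin]
  set P := iteratedFDeriv ℝ 2 v mstar with hP
  have hw : (fun _ : Fin 2 => w) = fun k : Fin 2 => ∑ i : Fin d, w i • EuclideanSpace.single i 1 := by
    funext k
    have := (EuclideanSpace.basisFun (Fin d) ℝ).toBasis.sum_repr w
    simp only [OrthonormalBasis.coe_toBasis_repr_apply, OrthonormalBasis.coe_toBasis,
      EuclideanSpace.basisFun_repr, EuclideanSpace.basisFun_apply] at this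
    exact this.symm
  rw [hw, P.map_sum]
  have expand : ∀ r : Fin 2 → Fin d,
      (P fun k => w (r k) • EuclideanSpace.single (r k) 1)
        = (w (r 0) * w (r 1)) * P ![EuclideanSpace.single (r 0) 1, EuclideanSpace.single (r 1) 1] := by
    intro r
    rw [P.map_smul_univ (fun k => w (r k)) (fun k => EuclideanSpace.single (r k) 1)]
    rw [Fin.prod_univ_two]
    have : (fun k : Fin 2 => EuclideanSpace.single (r k) (1:ℝ))
        = ![EuclideanSpace.single (r 0) 1, EuclideanSpace.single (r 1) 1] := by
      funext k; fin_cases k <;> simp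
    rw [this]; rfl
  rw [Finset.sum_congr rfl fun r _ => expand r]
  rw [← (piFinTwoEquiv fun _ => Fin d).symm.sum_comp]
  rw [Fintype.sum_prod_type]
  refine Finset.sum_congr rfl fun i _ => Finset.sum_congr rfl fun j _ => ?_
  simp only [piFinTwoEquiv_symm_apply, Fin.cons_zero, Fin.cons_one, Matrix.cons_val_zero,
    Matrix.cons_val_one, Matrix.head_cons]
  have : P ![EuclideanSpace.single i 1, EuclideanSpace.single j 1] = hess v mstar i j := rfl
  have e0 : (Fin.cons i (Fin.cons j finZeroElim) : Fin 2 → Fin d) 0 = i := rfl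
  have e1 : (Fin.cons i (Fin.cons j finZeroElim) : Fin 2 → Fin d) 1 = j := rfl
  rw [this]; ring

lemma normH_smul {d : ℕ} (H : Matrix (Fin d) (Fin d) ℝ) (c : ℝ) (x : Euc d) :
    normH H (c • x) = |c| * normH H x := by
  unfold normH
  rw [_root_.map_smul, real_inner_smul_left, real_inner_smul_right, ← mul_assoc, ← Real.sqrt_sq_eq_abs,
    ← Real.sqrt_mul (sq_nonneg c)]
  ring_nf

lemma quad_pos {d : ℕ} (H : Matrix (Fin d) (Fin d) ℝ) (hH : H.PosDef) (z : Euc d) (hz : z ≠ 0) :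
    0 < (inner ℝ z (Matrix.toEuclideanLin H z) : ℝ) := by
  have hz' : (fun i => z i) ≠ (0 : Fin d → ℝ) := by
    intro h; exact hz (by ext i; exact congrFun h i)
  have h := hH.dotProduct_mulVec_pos hz'
  rw [inner_toEuclideanLin]
  simpa [dotProduct, Matrix.mulVec, Finset.mul_sum, mul_assoc] using h

set_option maxHeartbeats 1000000 in
set_option maxHeartbeats 1000000 in
/-- **Convexity implies the linear growth assumption** (Lemma 2.7): if `v` is convex and
`a₃(1 + (1/2)^q)√(d/n) ≤ 3`, then Assumption 3 holds with `c₀ = 1/8`. -/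
theorem convex_implies_assumption3
    (d n : ℕ) (v : Euc d → ℝ) (mstar : Euc d) (q a₃ : ℝ)
    (hd : 1 ≤ d) (hn : 1 ≤ n) (hv : ContDiff ℝ 4 v)
    (hq : 0 < q) (ha₃ : 0 < a₃)
    (hA1 : Assumption1 v mstar)
    (hconv : ConvexOn ℝ Set.univ v)
    (hgrowth3 : ∀ x u : Euc d, normH (hess v mstar) u = 1 →
      iteratedFDeriv ℝ 3 v x (fun _ => u) ≤ a₃ *
        (max 1 (Real.sqrt ((n : ℝ) / d) * normH (hess v mstar) (x - mstar))) ^ q)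
    (hsmall : a₃ * (1 + (1 / 2 : ℝ) ^ q) * Real.sqrt ((d : ℝ) / n) ≤ 3) :
    Assumption3 n v mstar (1 / 8) := by
  intro x hx
  set H := hess v mstar with hHdef
  have hQpos : ∀ z : Euc d, z ≠ 0 → 0 < (inner ℝ z (Matrix.toEuclideanLin H z) : ℝ) :=
    quad_pos H hA1.2
  have hQnn : ∀ z : Euc d, 0 ≤ (inner ℝ z (Matrix.toEuclideanLin H z) : ℝ) := by
    intro z; rcases eq_or_ne z 0 with h | h
    · simp [h]
    · exact (hQpos z h).le
  have hNsq : ∀ z : Euc d, normH H z ^ 2 = (inner ℝ z (Matrix.toEuclideanLin H z) : ℝ) :=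
    fun z => Real.sq_sqrt (hQnn z)
  have hd0 : (0:ℝ) < (d:ℝ) := by exact_mod_cast hd
  have hn0 : (0:ℝ) < (n:ℝ) := by exact_mod_cast hn
  have hsqrt_pos : 0 < Real.sqrt ((d:ℝ)/n) := Real.sqrt_pos.mpr (by positivity)
  set r : ℝ := 1 / 2 * Real.sqrt ((d:ℝ)/n) with hrdef
  have hr0 : 0 < r := by rw [hrdef]; positivity
  set s : ℝ := normH H (x - mstar) with hsdef
  have hrs : r ≤ s := hx
  have hs0 : 0 < s := lt_of_lt_of_le hr0 hrs
  set t : ℝ := r / s with htdef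
  have ht0 : 0 < t := div_pos hr0 hs0
  have ht1 : t ≤ 1 := (div_le_one hs0).mpr hrs
  set w : Euc d := t • (x - mstar) with hwdef
  have hNw : normH H w = r := by
    rw [hwdef, normH_smul, ← hsdef, abs_of_pos ht0, htdef, div_mul_cancel₀ _ hs0.ne']
  -- smallness consequences
  have hpow : 0 < (1/2 : ℝ) ^ q := Real.rpow_pos_of_pos (by norm_num) q
  have ha3d : a₃ * Real.sqrt ((d:ℝ)/n) ≤ 3 := by
    nlinarith [mul_pos (mul_pos ha₃ hpow) hsqrt_pos]
  have ha3r : a₃ * r ≤ 3/2 := by rw [hrdef]; nlinarith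
  have hmulsqrt : Real.sqrt ((n:ℝ)/d) * Real.sqrt ((d:ℝ)/n) = 1 := by
    rw [← Real.sqrt_mul (by positivity), show (n:ℝ)/d * ((d:ℝ)/n) = 1 by field_simp]
    exact Real.sqrt_one
  -- the function along the segment
  have hφ : ContDiff ℝ 4 (fun c : ℝ => v (mstar + c • w)) :=
    hv.comp (contDiff_const.add (contDiff_id.smul contDiff_const))
  have hvmin : ∀ z : Euc d, v mstar ≤ v z := by
    intro z; rcases eq_or_ne z mstar with h | h
    · simp [h]
    · exact (hA1.1 z h).le
  have hderiv0 : deriv (fun c : ℝ => v (mstar + c • w)) 0 = 0 := by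
    have hmin : IsLocalMin (fun c : ℝ => v (mstar + c • w)) 0 := by
      apply Filter.Eventually.of_forall
      intro c
      simpa using hvmin (mstar + c • w)
    exact hmin.deriv_eq_zero
  have hUD : UniqueDiffOn ℝ (Icc (0:ℝ) 1) := uniqueDiffOn_Icc zero_lt_one
  have h0mem : (0:ℝ) ∈ Icc (0:ℝ) 1 := by constructor <;> norm_num
  have hI : uIcc (0:ℝ) 1 = Icc 0 1 := uIcc_of_le zero_le_one
  have hO : uIoo (0:ℝ) 1 = Ioo 0 1 := uIoo_of_le zero_le_one
  obtain ⟨c, hc, hTay⟩ := taylor_mean_remainder_lagrange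
    (f := fun c : ℝ => v (mstar + c • w)) (n := 2) (x₀ := 0) (x := 1) zero_ne_one
    (hφ.of_le (by exact_mod_cast (by norm_num : (2:ℕ) ≤ 4))).contDiffOn
    (by
      rw [hI, hO]
      refine DifferentiableOn.congr
        ((hφ.differentiable_iteratedDeriv 2
          (by exact_mod_cast (by norm_num : (2:ℕ) < 4))).differentiableOn) ?_
      intro y hy
      exact idw_eq hφ (by norm_num) hUD (Ioo_subset_Icc_self hy))
  rw [hO] at hc; rw [hI] at hTay
  have hcIcc : c ∈ Icc (0:ℝ) 1 := Ioo_subset_Icc_self hc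
  have htay_eval : taylorWithinEval (fun c : ℝ => v (mstar + c • w)) 2 (Icc 0 1) 0 1
      = v mstar + r^2/2 := by
    rw [taylor_within_apply]
    have e0 : iteratedDerivWithin 0 (fun c : ℝ => v (mstar + c • w)) (Icc 0 1) 0 = v mstar := by
      rw [idw_eq hφ (by norm_num) hUD h0mem]
      simp [iteratedDeriv_zero]
    have e1 : iteratedDerivWithin 1 (fun c : ℝ => v (mstar + c • w)) (Icc 0 1) 0 = 0 := by
      rw [idw_eq hφ (by norm_num) hUD h0mem, iteratedDeriv_one]
      exact hderiv0
    have e2 : iteratedDerivWithin 2 (fun c : ℝ => v (mstar + c • w)) (Icc 0 1) 0 = r^2 := by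
      rw [idw_eq hφ (by norm_num) hUD h0mem, line_deriv v hv mstar w (by norm_num) 0]
      have : mstar + (0:ℝ) • w = mstar := by simp
      rw [this, ← quad_eq v mstar w, ← hHdef, ← hNsq w, hNw]
    simp [Finset.sum_range_succ, e0, e1, e2, Nat.factorial]
    ring
  have e3 : iteratedDerivWithin 3 (fun c : ℝ => v (mstar + c • w)) (Icc 0 1) c
      = iteratedFDeriv ℝ 3 v (mstar + c • w) (fun _ => w) := by
    rw [idw_eq hφ (by norm_num) hUD hcIcc, line_deriv v hv mstar w (by norm_num) c]
  -- bound the third derivative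
  set pt : Euc d := mstar + c • w with hptdef
  set u : Euc d := r⁻¹ • w with hudef
  have hNu : normH H u = 1 := by
    rw [hudef, normH_smul, hNw, abs_of_pos (inv_pos.mpr hr0), inv_mul_cancel₀ hr0.ne']
  have hNpt : normH H (pt - mstar) = c * r := by
    rw [hptdef, add_sub_cancel_left, normH_smul, hNw, abs_of_pos hc.1]
  have hval : Real.sqrt ((n:ℝ)/d) * r = 1/2 := by
    rw [hrdef, show Real.sqrt ((n:ℝ)/d) * (1/2 * Real.sqrt ((d:ℝ)/n))
      = 1/2 * (Real.sqrt ((n:ℝ)/d) * Real.sqrt ((d:ℝ)/n)) from by ring, hmulsqrt]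
    norm_num
  have hmax : max 1 (Real.sqrt ((n:ℝ)/d) * normH H (pt - mstar)) = 1 := by
    rw [hNpt]
    apply max_eq_left
    have h1 : Real.sqrt ((n:ℝ)/d) * (c * r) = c * (Real.sqrt ((n:ℝ)/d) * r) := by ring
    rw [h1, hval]
    nlinarith [hc.1, hc.2]
  have hFu_le : ∀ z : Euc d, normH H z = 1 → iteratedFDeriv ℝ 3 v pt (fun _ => z) ≤ a₃ := by
    intro z hz
    have h := hgrowth3 pt z hz
    rwa [hmax, Real.one_rpow, mul_one] at h
  have hFneg : iteratedFDeriv ℝ 3 v pt (fun _ => -u) = -iteratedFDeriv ℝ 3 v pt (fun _ => u) := by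
    have h1 : (fun _ : Fin 3 => -u) = fun i : Fin 3 => (fun _ : Fin 3 => (-1:ℝ)) i • u := by
      funext i; simp
    rw [h1, (iteratedFDeriv ℝ 3 v pt).map_smul_univ]
    simp [Finset.prod_const]
    norm_num
  have hNu' : normH H (-u) = 1 := by
    rw [show -u = (-1:ℝ) • u from by simp, normH_smul]
    simpa using hNu
  have habsF : |iteratedFDeriv ℝ 3 v pt (fun _ => u)| ≤ a₃ := by
    rw [abs_le]
    constructor
    · have h := hFu_le (-u) hNu'
      rw [hFneg] at h
      linarith
    · exact hFu_le u hNu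
  have hw_ru : w = r • u := by rw [hudef, smul_inv_smul₀ hr0.ne']
  have hD3 : iteratedFDeriv ℝ 3 v pt (fun _ => w)
      = r^3 * iteratedFDeriv ℝ 3 v pt (fun _ => u) := by
    conv_lhs => rw [hw_ru]
    have h1 : (fun _ : Fin 3 => r • u) = fun i : Fin 3 => (fun _ : Fin 3 => r) i • u := by
      funext i; simp
    rw [h1, (iteratedFDeriv ℝ 3 v pt).map_smul_univ]
    simp [Finset.prod_const]
  have habsD : |iteratedFDeriv ℝ 3 v pt (fun _ => w)| ≤ a₃ * r^3 := by
    rw [hD3, abs_mul, abs_of_pos (pow_pos hr0 3)]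
    nlinarith [pow_pos hr0 3]
  -- conclude the key lower bound
  have hD := abs_le.mp habsD
  have ha3r3 : a₃ * r^3 ≤ 3/2 * r^2 := by nlinarith [sq_nonneg r, hr0]
  have hKB : r^2/4 ≤ v (mstar + w) - v mstar := by
    rw [htay_eval] at hTay
    norm_num [Nat.factorial, one_smul] at hTay
    rw [e3] at hTay
    linarith [hD.1, hD.2]
  -- convexity step
  have hptw : (1 - t) • mstar + t • x = mstar + w := by
    rw [hwdef]
    module
  have hcvx := hconv.2 (Set.mem_univ mstar) (Set.mem_univ x)
    (sub_nonneg.mpr ht1) ht0.le (by ring)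
  rw [hptw] at hcvx
  simp only [smul_eq_mul] at hcvx
  have hkey : r^2/4 ≤ t * (v x - v mstar) := by
    have hexp : t * (v x - v mstar) = (1 - t) * v mstar + t * v x - v mstar := by ring
    rw [hexp]
    linarith [hKB, hcvx]
  have hfin : r / 4 * s ≤ v x - v mstar := by
    rw [htdef] at hkey
    have h1 : r^2/4 * s ≤ r / s * (v x - v mstar) * s :=
      mul_le_mul_of_nonneg_right hkey hs0.le
    have h2 : r / s * (v x - v mstar) * s = r * (v x - v mstar) := by
      field_simp
    rw [h2] at h1
    have h3 : r^2/4 * s = r * (r / 4 * s) := by ring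
    rw [h3] at h1
    exact le_of_mul_le_mul_left (by linarith) hr0
  calc 1 / 8 * Real.sqrt ((d:ℝ)/n) * s = r / 4 * s := by rw [hrdef]; ring
    _ ≤ v x - v mstar := hfin


end
end

section
/- Let f = (f₁, …, f_d) : ℝ^d × ℝ^{d×d} → ℝ^d be C³, where ℝ^{d×d} carries the matrix operator norm. Suppose f(0, 0) = 0, ∇_σ f(0, 0) = 0, ∇_m f(m, σ) is a symmetric matrix for all (m, σ), and ∇_m f(0, 0) = I_d. Let r > 0 be such that sup over (m, σ) with ∥σ∥² + ∥m∥² ≤ r² of ∥∇f(m, σ) − ∇f(0, 0)∥_op ≤ 1/4. Then for each σ ∈ ℝ^{d×d} with ∥σ∥ ≤ r/2 there exists a unique m = m(σ) ∈ ℝ^d such that f(m(σ), σ) = 0 and ∥σ∥² + ∥m(σ)∥² ≤ r². Furthermore, the map σ ↦ m(σ) is C², with (1/2)·I_d ⪯ ∇_m f(m(σ), σ) ⪯ (3/2)·I_d and ∥∇_σ m(σ)∥_op ≤ 1. -/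
open MeasureTheory Real Set
open scoped Classical

set_option maxHeartbeats 4000000
set_option synthInstance.maxHeartbeats 400000

noncomputable section

open RealInnerProductSpace in
/-- **Quantitative implicit function theorem** (Lemma 5.4). Here the matrix space
`ℝ^{d×d}` (with the operator norm) is represented as the space of continuous linear maps
`Euc d →L[ℝ] Euc d`. -/
theorem quantitative_IFT
    (d : ℕ)
    (f : Euc d × (Euc d →L[ℝ] Euc d) → Euc d)
    (hf : ContDiff ℝ 3 f)
    (hf00 : f (0, 0) = 0)
    (hσ00 : fderiv ℝ (fun σ : Euc d →L[ℝ] Euc d => f (0, σ)) 0 = 0)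
    (hsym : ∀ (m : Euc d) (σ : Euc d →L[ℝ] Euc d) (u w : Euc d),
      ⟪fderiv ℝ (fun m' => f (m', σ)) m u, w⟫ = ⟪u, fderiv ℝ (fun m' => f (m', σ)) m w⟫)
    (hm00 : fderiv ℝ (fun m' : Euc d => f (m', 0)) 0 = ContinuousLinearMap.id ℝ (Euc d))
    (r : ℝ) (hr : 0 < r)
    (hsmall : ∀ (m : Euc d) (σ : Euc d →L[ℝ] Euc d), ‖σ‖ ^ 2 + ‖m‖ ^ 2 ≤ r ^ 2 →
      ‖fderiv ℝ f (m, σ) - fderiv ℝ f (0, 0)‖ ≤ 1 / 4) :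
    ∃ mfun : (Euc d →L[ℝ] Euc d) → Euc d,
      ContDiffOn ℝ 2 mfun {σ : Euc d →L[ℝ] Euc d | ‖σ‖ ≤ r / 2} ∧
      ∀ σ : Euc d →L[ℝ] Euc d, ‖σ‖ ≤ r / 2 →
        (f (mfun σ, σ) = 0 ∧ ‖σ‖ ^ 2 + ‖mfun σ‖ ^ 2 ≤ r ^ 2) ∧
        (∀ m' : Euc d, f (m', σ) = 0 → ‖σ‖ ^ 2 + ‖m'‖ ^ 2 ≤ r ^ 2 → m' = mfun σ) ∧
        (∀ u : Euc d,
          (1 / 2) * ‖u‖ ^ 2 ≤ ⟪fderiv ℝ (fun m' => f (m', σ)) (mfun σ) u, u⟫ ∧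
          ⟪fderiv ℝ (fun m' => f (m', σ)) (mfun σ) u, u⟫ ≤ (3 / 2) * ‖u‖ ^ 2) ∧
        ‖fderivWithin ℝ mfun {σ' : Euc d →L[ℝ] Euc d | ‖σ'‖ ≤ r / 2} σ‖ ≤ 1 := by
  classical
  have hn13 : (1 : ℕ∞) ≤ 3 := by norm_num
  have hdiff : Differentiable ℝ f := hf.differentiable (by norm_num)
  -- partial derivative formulas
  have hL1 : ∀ (m : Euc d) (σ : Euc d →L[ℝ] Euc d),
      fderiv ℝ (fun m' => f (m', σ)) m
        = (fderiv ℝ f (m, σ)).comp (ContinuousLinearMap.inl ℝ (Euc d) (Euc d →L[ℝ] Euc d)) :=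
    fun m σ => ((hdiff (m, σ)).hasFDerivAt.comp m (hasFDerivAt_prodMk_left m σ)).fderiv
  have hL2 : ∀ (m : Euc d) (σ : Euc d →L[ℝ] Euc d),
      fderiv ℝ (fun σ' => f (m, σ')) σ
        = (fderiv ℝ f (m, σ)).comp (ContinuousLinearMap.inr ℝ (Euc d) (Euc d →L[ℝ] Euc d)) :=
    fun m σ => ((hdiff (m, σ)).hasFDerivAt.comp σ (hasFDerivAt_prodMk_right m σ)).fderiv
  have hnormmk : ∀ (u : Euc d), ‖((u, (0 : Euc d →L[ℝ] Euc d)) : Euc d × (Euc d →L[ℝ] Euc d))‖ = ‖u‖ := by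
    intro u
    rw [Prod.norm_def, norm_zero]
    exact max_eq_left (norm_nonneg u)
  have hnormmk2 : ∀ (v : Euc d →L[ℝ] Euc d),
      ‖(((0 : Euc d), v) : Euc d × (Euc d →L[ℝ] Euc d))‖ = ‖v‖ := by
    intro v
    rw [Prod.norm_def, norm_zero]
    exact max_eq_right (norm_nonneg v)
  have hDm : ∀ (m : Euc d) (σ : Euc d →L[ℝ] Euc d), ‖σ‖ ^ 2 + ‖m‖ ^ 2 ≤ r ^ 2 →
      ‖(fderiv ℝ f (m, σ)).comp (ContinuousLinearMap.inl ℝ (Euc d) (Euc d →L[ℝ] Euc d))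
        - ContinuousLinearMap.id ℝ (Euc d)‖ ≤ 1 / 4 := by
    intro m σ h
    have h0 : (fderiv ℝ f (0, 0)).comp (ContinuousLinearMap.inl ℝ (Euc d) (Euc d →L[ℝ] Euc d))
        = ContinuousLinearMap.id ℝ (Euc d) := by rw [← hL1]; exact hm00
    rw [← h0, ← ContinuousLinearMap.sub_comp]
    refine ContinuousLinearMap.opNorm_le_bound _ (by norm_num) fun u => ?_
    have h1 := (fderiv ℝ f (m, σ) - fderiv ℝ f (0, 0)).le_opNorm
      ((u, (0 : Euc d →L[ℝ] Euc d)) : Euc d × (Euc d →L[ℝ] Euc d))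
    rw [hnormmk u] at h1
    have h2 : ‖fderiv ℝ f (m, σ) - fderiv ℝ f (0, 0)‖ * ‖u‖ ≤ 1 / 4 * ‖u‖ :=
      mul_le_mul_of_nonneg_right (hsmall m σ h) (norm_nonneg u)
    exact le_trans h1 h2
  have hDσ : ∀ (m : Euc d) (σ : Euc d →L[ℝ] Euc d), ‖σ‖ ^ 2 + ‖m‖ ^ 2 ≤ r ^ 2 →
      ‖(fderiv ℝ f (m, σ)).comp (ContinuousLinearMap.inr ℝ (Euc d) (Euc d →L[ℝ] Euc d))‖
        ≤ 1 / 4 := by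
    intro m σ h
    have h0 : (fderiv ℝ f (0, 0)).comp (ContinuousLinearMap.inr ℝ (Euc d) (Euc d →L[ℝ] Euc d))
        = 0 := by rw [← hL2]; exact hσ00
    have heq : (fderiv ℝ f (m, σ)).comp (ContinuousLinearMap.inr ℝ (Euc d) (Euc d →L[ℝ] Euc d))
        = (fderiv ℝ f (m, σ) - fderiv ℝ f (0, 0)).comp
            (ContinuousLinearMap.inr ℝ (Euc d) (Euc d →L[ℝ] Euc d)) := by
      rw [ContinuousLinearMap.sub_comp, h0]
      abel
    rw [heq]
    refine ContinuousLinearMap.opNorm_le_bound _ (by norm_num) fun v => ?_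
    have h1 := (fderiv ℝ f (m, σ) - fderiv ℝ f (0, 0)).le_opNorm
      (((0 : Euc d), v) : Euc d × (Euc d →L[ℝ] Euc d))
    rw [hnormmk2 v] at h1
    have h2 : ‖fderiv ℝ f (m, σ) - fderiv ℝ f (0, 0)‖ * ‖v‖ ≤ 1 / 4 * ‖v‖ :=
      mul_le_mul_of_nonneg_right (hsmall m σ h) (norm_nonneg v)
    exact le_trans h1 h2
  -- Lipschitz bound for the contraction map
  have hmemball : ∀ (σ : Euc d →L[ℝ] Euc d), ‖σ‖ ≤ r → ∀ m : Euc d,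
      m ∈ Metric.closedBall (0 : Euc d) (Real.sqrt (r ^ 2 - ‖σ‖ ^ 2)) →
      ‖σ‖ ^ 2 + ‖m‖ ^ 2 ≤ r ^ 2 := by
    intro σ hσ m hm
    rw [Metric.mem_closedBall, dist_zero_right] at hm
    have hnn : (0 : ℝ) ≤ r ^ 2 - ‖σ‖ ^ 2 := by nlinarith [norm_nonneg σ]
    have h2 : ‖m‖ ^ 2 ≤ r ^ 2 - ‖σ‖ ^ 2 := by
      have hs := Real.sq_sqrt hnn
      nlinarith [norm_nonneg m, Real.sqrt_nonneg (r ^ 2 - ‖σ‖ ^ 2)]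
    linarith
  have hLip : ∀ (σ : Euc d →L[ℝ] Euc d), ‖σ‖ ≤ r →
      ∀ m₁ ∈ Metric.closedBall (0 : Euc d) (Real.sqrt (r ^ 2 - ‖σ‖ ^ 2)),
      ∀ m₂ ∈ Metric.closedBall (0 : Euc d) (Real.sqrt (r ^ 2 - ‖σ‖ ^ 2)),
      ‖(m₁ - f (m₁, σ)) - (m₂ - f (m₂, σ))‖ ≤ 1 / 4 * ‖m₁ - m₂‖ := by
    intro σ hσ m₁ h₁ m₂ h₂
    have hdm : ∀ m : Euc d, DifferentiableAt ℝ (fun m' : Euc d => f (m', σ)) m := fun m =>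
      ((hdiff (m, σ)).hasFDerivAt.comp m (hasFDerivAt_prodMk_left m σ)).differentiableAt
    refine Convex.norm_image_sub_le_of_norm_fderiv_le
      (f := fun m : Euc d => m - f (m, σ)) (fun m _ => (differentiableAt_id.sub (hdm m)))
      (fun m hm => ?_) (convex_closedBall _ _) h₂ h₁
    rw [fderiv_fun_sub differentiableAt_fun_id (hdm m), fderiv_id', hL1, norm_sub_rev]
    exact hDm m σ (hmemball σ hσ m hm)
  have hVal : ∀ (σ : Euc d →L[ℝ] Euc d), ‖σ‖ ≤ r → ‖f (0, σ)‖ ≤ 1 / 4 * ‖σ‖ := by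
    intro σ hσ
    have hdσ : ∀ σ' : Euc d →L[ℝ] Euc d,
        DifferentiableAt ℝ (fun σ'' : Euc d →L[ℝ] Euc d => f (0, σ'')) σ' := fun σ' =>
      ((hdiff (0, σ')).hasFDerivAt.comp σ' (hasFDerivAt_prodMk_right 0 σ')).differentiableAt
    have key := Convex.norm_image_sub_le_of_norm_fderiv_le (C := 1 / 4)
      (f := fun σ' : Euc d →L[ℝ] Euc d => f (0, σ')) (fun σ' _ => hdσ σ')
      (fun σ' hσ' => ?_) (convex_closedBall (0 : Euc d →L[ℝ] Euc d) r)
      (Metric.mem_closedBall_self (le_of_lt hr))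
      (show σ ∈ Metric.closedBall (0 : Euc d →L[ℝ] Euc d) r by
        rw [Metric.mem_closedBall, dist_zero_right]; exact hσ)
    · have hf00' : f (0 : Euc d × (Euc d →L[ℝ] Euc d)) = 0 := hf00
      simpa [hf00', hf00] using key
    · rw [hL2]
      refine hDσ 0 σ' ?_
      rw [Metric.mem_closedBall, dist_zero_right] at hσ'
      simp only [norm_zero]
      nlinarith [norm_nonneg σ']
  -- existence and uniqueness of zero
  have hEU : ∀ σ : Euc d →L[ℝ] Euc d, ‖σ‖ ≤ 3 * r / 5 →
      ∃ m : Euc d, f (m, σ) = 0 ∧ ‖m‖ ≤ ‖σ‖ / 3 ∧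
        ∀ m' : Euc d, ‖σ‖ ^ 2 + ‖m'‖ ^ 2 ≤ r ^ 2 → f (m', σ) = 0 → m' = m := by
    intro σ hσ35
    have hσr : ‖σ‖ ≤ r := by linarith
    set ρ : ℝ := Real.sqrt (r ^ 2 - ‖σ‖ ^ 2) with hρ
    have hnn : (0 : ℝ) ≤ r ^ 2 - ‖σ‖ ^ 2 := by nlinarith [norm_nonneg σ]
    have hσρ : ‖σ‖ ≤ ρ := by
      rw [hρ, Real.le_sqrt (norm_nonneg σ) hnn]
      nlinarith [norm_nonneg σ]
    have hρ0 : (0 : ℝ) ≤ ρ := hρ ▸ Real.sqrt_nonneg _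
    have h0mem : (0 : Euc d) ∈ Metric.closedBall (0 : Euc d) ρ :=
      Metric.mem_closedBall_self (Real.sqrt_nonneg _)
    have hbound : ∀ m : Euc d, m ∈ Metric.closedBall (0 : Euc d) ρ →
        ‖m - f (m, σ)‖ ≤ 1 / 4 * ‖m‖ + 1 / 4 * ‖σ‖ := by
      intro m hm
      have h₁ := hLip σ hσr m hm 0 h0mem
      have h₂ := hVal σ hσr
      have heq : m - f (m, σ)
          = ((m - f (m, σ)) - (0 - f (0, σ))) + (0 - f (0, σ)) := by abel
      calc ‖m - f (m, σ)‖ = ‖((m - f (m, σ)) - (0 - f (0, σ))) + (0 - f (0, σ))‖ := by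
            rw [← heq]
        _ ≤ ‖(m - f (m, σ)) - (0 - f (0, σ))‖ + ‖(0 : Euc d) - f (0, σ)‖ := norm_add_le _ _
        _ ≤ 1 / 4 * ‖m - 0‖ + ‖(0 : Euc d) - f (0, σ)‖ := add_le_add h₁ le_rfl
        _ = 1 / 4 * ‖m‖ + ‖f (0, σ)‖ := by rw [sub_zero, zero_sub, norm_neg]
        _ ≤ 1 / 4 * ‖m‖ + 1 / 4 * ‖σ‖ := add_le_add le_rfl h₂
    have hself : ∀ m : Euc d, m ∈ Metric.closedBall (0 : Euc d) ρ →
        (m - f (m, σ)) ∈ Metric.closedBall (0 : Euc d) ρ := by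
      intro m hm
      rw [Metric.mem_closedBall, dist_zero_right]
      have hmρ : ‖m‖ ≤ ρ := by rwa [Metric.mem_closedBall, dist_zero_right] at hm
      have := hbound m hm
      linarith
    haveI : Nonempty (Metric.closedBall (0 : Euc d) ρ) := ⟨⟨0, h0mem⟩⟩
    haveI : CompleteSpace (Metric.closedBall (0 : Euc d) ρ) :=
      (Metric.isClosed_closedBall (x := (0 : Euc d)) (ε := ρ)).completeSpace_coe
    set Ψ : Metric.closedBall (0 : Euc d) ρ → Metric.closedBall (0 : Euc d) ρ :=
      fun m => ⟨m.1 - f (m.1, σ), hself m.1 m.2⟩ with hΨ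
    have hcontr : ContractingWith (1 / 4 : NNReal) Ψ := by
      constructor
      · rw [← NNReal.coe_lt_coe]; norm_num
      · refine LipschitzWith.of_dist_le_mul fun x y => ?_
        rw [Subtype.dist_eq, Subtype.dist_eq, dist_eq_norm, dist_eq_norm]
        have := hLip σ hσr x.1 x.2 y.1 y.2
        calc ‖(Ψ x).1 - (Ψ y).1‖ = ‖(x.1 - f (x.1, σ)) - (y.1 - f (y.1, σ))‖ := rfl
          _ ≤ 1 / 4 * ‖x.1 - y.1‖ := this
          _ = ((1 / 4 : NNReal) : ℝ) * ‖x.1 - y.1‖ := by norm_num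
    set m₀ := ContractingWith.fixedPoint Ψ hcontr with hm₀
    have hfix : Ψ m₀ = m₀ := hcontr.fixedPoint_isFixedPt
    have hfixv : m₀.1 - f (m₀.1, σ) = m₀.1 := congrArg Subtype.val hfix
    have hzero : f (m₀.1, σ) = 0 := sub_eq_self.mp hfixv
    have hmb : ‖m₀.1‖ ≤ ‖σ‖ / 3 := by
      have := hbound m₀.1 m₀.2
      rw [hfixv] at this
      linarith
    refine ⟨m₀.1, hzero, hmb, fun m' hb' hz' => ?_⟩
    have hm'ρ : m' ∈ Metric.closedBall (0 : Euc d) ρ := by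
      rw [Metric.mem_closedBall, dist_zero_right, hρ,
        Real.le_sqrt (norm_nonneg m') hnn]
      linarith
    have h := hLip σ hσr m' hm'ρ m₀.1 m₀.2
    rw [hz', hzero, sub_zero, sub_zero] at h
    have : ‖m' - m₀.1‖ = 0 := by linarith [norm_nonneg (m' - m₀.1)]
    exact sub_eq_zero.mp (norm_eq_zero.mp this)
  choose mf hmf0 hmfb hmfu using hEU
  set M : (Euc d →L[ℝ] Euc d) → Euc d :=
    fun σ => if h : ‖σ‖ ≤ 3 * r / 5 then mf σ h else 0 with hM
  have hMprop : ∀ (σ : Euc d →L[ℝ] Euc d), ‖σ‖ ≤ 3 * r / 5 →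
      f (M σ, σ) = 0 ∧ ‖M σ‖ ≤ ‖σ‖ / 3 ∧
        ∀ m' : Euc d, ‖σ‖ ^ 2 + ‖m'‖ ^ 2 ≤ r ^ 2 → f (m', σ) = 0 → m' = M σ := by
    intro σ h
    have hMσ : M σ = mf σ h := by rw [hM]; simp only [dif_pos h]
    rw [hMσ]
    exact ⟨hmf0 σ h, hmfb σ h, hmfu σ h⟩
  -- smoothness
  have hMcd : ∀ σ₀ : Euc d →L[ℝ] Euc d, ‖σ₀‖ ≤ r / 2 → ContDiffAt ℝ 2 M σ₀ := by
    intro σ₀ hσ₀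
    have hσ₀35 : ‖σ₀‖ ≤ 3 * r / 5 := by linarith
    obtain ⟨h0σ₀, hbσ₀, -⟩ := hMprop σ₀ hσ₀35
    have hball₀ : ‖σ₀‖ ^ 2 + ‖M σ₀‖ ^ 2 ≤ r ^ 2 := by
      nlinarith [norm_nonneg σ₀, norm_nonneg (M σ₀)]
    set p₀ : Euc d × (Euc d →L[ℝ] Euc d) := (M σ₀, σ₀) with hp₀
    set D := fderiv ℝ f p₀ with hD
    set A := D.comp (ContinuousLinearMap.inl ℝ (Euc d) (Euc d →L[ℝ] Euc d)) with hA
    set B := D.comp (ContinuousLinearMap.inr ℝ (Euc d) (Euc d →L[ℝ] Euc d)) with hB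
    have hAnear : ‖A - ContinuousLinearMap.id ℝ (Euc d)‖ ≤ 1 / 4 := hDm _ _ hball₀
    have hlt : ‖(1 : Euc d →L[ℝ] Euc d) - A‖ < 1 := by
      rw [ContinuousLinearMap.one_def, norm_sub_rev]
      calc ‖A - ContinuousLinearMap.id ℝ (Euc d)‖ ≤ 1 / 4 := hAnear
        _ < 1 := by norm_num
    set u : (Euc d →L[ℝ] Euc d)ˣ := Units.oneSub ((1 : Euc d →L[ℝ] Euc d) - A) hlt with hu
    have huval : (u : Euc d →L[ℝ] Euc d) = A := sub_sub_cancel 1 A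
    set Ainv : Euc d →L[ℝ] Euc d := ((u⁻¹ : (Euc d →L[ℝ] Euc d)ˣ) : Euc d →L[ℝ] Euc d)
      with hAinv
    have hAinvA : ∀ x : Euc d, Ainv (A x) = x := by
      intro x
      have h1 : Ainv * (A : Euc d →L[ℝ] Euc d) = 1 := by rw [← huval]; exact u.inv_mul
      have := congrFun (congrArg DFunLike.coe h1) x
      simpa [ContinuousLinearMap.mul_apply] using this
    have hAAinv : ∀ x : Euc d, A (Ainv x) = x := by
      intro x
      have h1 : (A : Euc d →L[ℝ] Euc d) * Ainv = 1 := by rw [← huval]; exact u.mul_inv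
      have := congrFun (congrArg DFunLike.coe h1) x
      simpa [ContinuousLinearMap.mul_apply] using this
    have hDsplit : ∀ w : Euc d, ∀ v : Euc d →L[ℝ] Euc d, D (w, v) = A w + B v := by
      intro w v
      have hsum : ((w, v) : Euc d × (Euc d →L[ℝ] Euc d))
          = ((w, 0) : Euc d × (Euc d →L[ℝ] Euc d)) + ((0, v) : Euc d × (Euc d →L[ℝ] Euc d)) := by
        simp
      rw [hsum, map_add]
      rfl
    set G : Euc d × (Euc d →L[ℝ] Euc d) → Euc d × (Euc d →L[ℝ] Euc d) :=
      fun p => (f p, p.2) with hG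
    set fwd : (Euc d × (Euc d →L[ℝ] Euc d)) →L[ℝ] (Euc d × (Euc d →L[ℝ] Euc d)) :=
      D.prod (ContinuousLinearMap.snd ℝ (Euc d) (Euc d →L[ℝ] Euc d)) with hfwd
    set bwd : (Euc d × (Euc d →L[ℝ] Euc d)) →L[ℝ] (Euc d × (Euc d →L[ℝ] Euc d)) :=
      (Ainv.comp ((ContinuousLinearMap.fst ℝ (Euc d) (Euc d →L[ℝ] Euc d))
          - B.comp (ContinuousLinearMap.snd ℝ (Euc d) (Euc d →L[ℝ] Euc d)))).prod
        (ContinuousLinearMap.snd ℝ (Euc d) (Euc d →L[ℝ] Euc d)) with hbwd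
    have hleft : Function.LeftInverse bwd fwd := by
      rintro ⟨w, v⟩
      have h1 : fwd (w, v) = (D (w, v), v) := rfl
      have h2 : bwd (D (w, v), v) = (Ainv (D (w, v) - B v), v) := rfl
      have h3 : D (w, v) - B v = A w := by rw [hDsplit]; abel
      rw [h1, h2, h3, hAinvA]
    have hright : Function.RightInverse bwd fwd := by
      rintro ⟨x, y⟩
      have h1 : bwd (x, y) = (Ainv (x - B y), y) := rfl
      have h2 : fwd (Ainv (x - B y), y) = (D (Ainv (x - B y), y), y) := rfl
      rw [h1, h2, hDsplit, hAAinv]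
      simp
    set e : (Euc d × (Euc d →L[ℝ] Euc d)) ≃L[ℝ] (Euc d × (Euc d →L[ℝ] Euc d)) :=
      ContinuousLinearEquiv.equivOfInverse fwd bwd hleft hright with he
    have hGcd : ContDiffAt ℝ 2 G p₀ :=
      ((hf.prodMk contDiff_snd).of_le (by norm_num)).contDiffAt
    have hGd' : HasFDerivAt G (e : (Euc d × (Euc d →L[ℝ] Euc d)) →L[ℝ]
        (Euc d × (Euc d →L[ℝ] Euc d))) p₀ := by
      have hcoe : (e : (Euc d × (Euc d →L[ℝ] Euc d)) →L[ℝ] (Euc d × (Euc d →L[ℝ] Euc d)))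
          = fwd := ContinuousLinearMap.ext fun p => rfl
      rw [hcoe, hfwd, hD]
      exact (hdiff p₀).hasFDerivAt.prodMk (hasFDerivAt_snd)
    have hn12 : (1 : WithTop ℕ∞) ≤ 2 := by norm_num
    have hstrict := hGcd.hasStrictFDerivAt' hGd' (by norm_num)
    have hGp₀ : G p₀ = ((0 : Euc d), σ₀) := by
      rw [hG]
      simp only [hp₀]
      rw [Prod.mk.injEq]
      exact ⟨h0σ₀, rfl⟩
    obtain ⟨g, hgcd', hgright, hgval⟩ :
        ∃ g : Euc d × (Euc d →L[ℝ] Euc d) → Euc d × (Euc d →L[ℝ] Euc d),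
          ContDiffAt ℝ 2 g (((0 : Euc d), σ₀) : Euc d × (Euc d →L[ℝ] Euc d)) ∧
          (∀ᶠ y in nhds ((((0 : Euc d), σ₀)) : Euc d × (Euc d →L[ℝ] Euc d)), G (g y) = y) ∧
          g (((0 : Euc d), σ₀) : Euc d × (Euc d →L[ℝ] Euc d)) = p₀ := by
      refine ⟨hstrict.localInverse G e p₀, ?_, ?_, ?_⟩
      · have h := hGcd.to_localInverse hGd' (by norm_num)
        rwa [hGp₀] at h
      · have h := hstrict.eventually_right_inverse
        rwa [hGp₀] at h
      · have h := hstrict.localInverse_apply_image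
        rwa [hGp₀] at h
    have h1cd : ContDiffAt ℝ 2 (fun σ : Euc d →L[ℝ] Euc d => g ((0 : Euc d), σ)) σ₀ :=
      hgcd'.comp σ₀ ((contDiffAt_const (c := (0 : Euc d))).prodMk contDiffAt_id)
    have hmloccd : ContDiffAt ℝ 2 (fun σ : Euc d →L[ℝ] Euc d => (g ((0 : Euc d), σ)).1) σ₀ :=
      contDiff_fst.contDiffAt.comp σ₀ h1cd
    have hev : M =ᶠ[nhds σ₀] (fun σ : Euc d →L[ℝ] Euc d => (g ((0 : Euc d), σ)).1) := by
      have htend : Filter.Tendsto (fun σ : Euc d →L[ℝ] Euc d => (((0 : Euc d), σ) :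
          Euc d × (Euc d →L[ℝ] Euc d))) (nhds σ₀) (nhds ((0 : Euc d), σ₀)) :=
        (continuous_const.prodMk continuous_id).tendsto σ₀
      have hri : ∀ᶠ σ in nhds σ₀, G (g ((0 : Euc d), σ)) = ((0 : Euc d), σ) :=
        htend.eventually hgright
      have hmlocval : (g ((0 : Euc d), σ₀)).1 = M σ₀ := by rw [hgval]
      have hnear : ∀ᶠ σ in nhds σ₀, ‖(g ((0 : Euc d), σ)).1 - M σ₀‖ < r / 4 := by
        have hc : ContinuousAt (fun σ : Euc d →L[ℝ] Euc d => (g ((0 : Euc d), σ)).1) σ₀ :=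
          hmloccd.continuousAt
        have hmem : Metric.ball (M σ₀) (r / 4) ∈
            nhds ((fun σ : Euc d →L[ℝ] Euc d => (g ((0 : Euc d), σ)).1) σ₀) := by
          show Metric.ball (M σ₀) (r / 4) ∈ nhds ((g ((0 : Euc d), σ₀)).1)
          rw [hmlocval]
          exact Metric.ball_mem_nhds _ (by linarith)
        have := hc.preimage_mem_nhds hmem
        filter_upwards [this] with σ hσ
        rw [Set.mem_preimage, Metric.mem_ball, dist_eq_norm] at hσ
        exact hσ
      have hsmallσ : ∀ᶠ σ in nhds σ₀, ‖σ‖ < 3 * r / 5 := by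
        have hmem : Metric.ball σ₀ (r / 20) ∈ nhds σ₀ := Metric.ball_mem_nhds _ (by linarith)
        filter_upwards [hmem] with σ hσ
        rw [Metric.mem_ball, dist_eq_norm] at hσ
        calc ‖σ‖ = ‖σ - σ₀ + σ₀‖ := by rw [sub_add_cancel]
          _ ≤ ‖σ - σ₀‖ + ‖σ₀‖ := norm_add_le _ _
          _ < 3 * r / 5 := by linarith
      filter_upwards [hri, hnear, hsmallσ] with σ h1 h2 h3
      have hsnd : (g ((0 : Euc d), σ)).2 = σ := congrArg Prod.snd h1
      have hq : g ((0 : Euc d), σ) = ((g ((0 : Euc d), σ)).1, σ) := by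
        rw [Prod.mk.injEq]
        exact ⟨rfl, hsnd⟩
      have hfz : f ((g ((0 : Euc d), σ)).1, σ) = 0 := by
        rw [← hq]
        exact congrArg Prod.fst h1
      have hσ35 : ‖σ‖ ≤ 3 * r / 5 := le_of_lt h3
      have hMσ₀ : ‖M σ₀‖ ≤ r / 6 := le_trans hbσ₀ (by linarith)
      have hx : ‖(g ((0 : Euc d), σ)).1‖ ≤ 5 * r / 12 := by
        calc ‖(g ((0 : Euc d), σ)).1‖
            = ‖((g ((0 : Euc d), σ)).1 - M σ₀) + M σ₀‖ := by rw [sub_add_cancel]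
          _ ≤ ‖(g ((0 : Euc d), σ)).1 - M σ₀‖ + ‖M σ₀‖ := norm_add_le _ _
          _ ≤ 5 * r / 12 := by linarith
      have hb : ‖σ‖ ^ 2 + ‖(g ((0 : Euc d), σ)).1‖ ^ 2 ≤ r ^ 2 := by
        nlinarith [norm_nonneg σ, norm_nonneg ((g ((0 : Euc d), σ)).1), hr.le]
      exact ((hMprop σ hσ35).2.2 _ hb hfz).symm
    exact hmloccd.congr_of_eventuallyEq hev
  -- conclusion
  have hsetball : {σ' : Euc d →L[ℝ] Euc d | ‖σ'‖ ≤ r / 2}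
      = Metric.closedBall (0 : Euc d →L[ℝ] Euc d) (r / 2) := by
    ext σ'
    simp [Metric.mem_closedBall, dist_zero_right]
  have hud : UniqueDiffOn ℝ {σ' : Euc d →L[ℝ] Euc d | ‖σ'‖ ≤ r / 2} := by
    rw [hsetball]
    refine uniqueDiffOn_convex (convex_closedBall _ _) ?_
    rw [interior_closedBall _ (by positivity : (r / 2 : ℝ) ≠ 0)]
    exact Metric.nonempty_ball.mpr (by linarith)
  refine ⟨M, fun σ hσ => (hMcd σ hσ).contDiffWithinAt, fun σ hσ => ?_⟩
  have hσ35 : ‖σ‖ ≤ 3 * r / 5 := by linarith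
  obtain ⟨h0, hb3, huniq⟩ := hMprop σ hσ35
  have hball : ‖σ‖ ^ 2 + ‖M σ‖ ^ 2 ≤ r ^ 2 := by
    nlinarith [norm_nonneg σ, norm_nonneg (M σ), hr.le]
  refine ⟨⟨h0, hball⟩, fun m' h0' hb' => huniq m' hb' h0', ?_, ?_⟩
  · -- spectral bounds
    intro w
    have hT : ‖fderiv ℝ (fun m' : Euc d => f (m', σ)) (M σ)
        - ContinuousLinearMap.id ℝ (Euc d)‖ ≤ 1 / 4 := by
      rw [hL1]; exact hDm _ _ hball
    set T := fderiv ℝ (fun m' : Euc d => f (m', σ)) (M σ)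
      - ContinuousLinearMap.id ℝ (Euc d) with hTdef
    have happ : fderiv ℝ (fun m' : Euc d => f (m', σ)) (M σ) w = w + T w := by
      rw [hTdef]
      simp [ContinuousLinearMap.sub_apply]
    have hTw : ‖T w‖ ≤ 1 / 4 * ‖w‖ :=
      le_trans (T.le_opNorm w) (mul_le_mul_of_nonneg_right hT (norm_nonneg w))
    have hinner : |⟪T w, w⟫| ≤ 1 / 4 * ‖w‖ ^ 2 := by
      calc |⟪T w, w⟫| ≤ ‖T w‖ * ‖w‖ := abs_real_inner_le_norm _ _
        _ ≤ 1 / 4 * ‖w‖ ^ 2 := by nlinarith [norm_nonneg w, norm_nonneg (T w)]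
      -- done
    have habs := abs_le.mp hinner
    rw [happ, inner_add_left, real_inner_self_eq_norm_sq]
    constructor
    · nlinarith [norm_nonneg w]
    · nlinarith [norm_nonneg w]
  · -- derivative bound
    have hdm : DifferentiableAt ℝ M σ := (hMcd σ hσ).differentiableAt (by norm_num)
    rw [hdm.fderivWithin (hud σ hσ)]
    set Dm := fderiv ℝ M σ with hDm'
    have hσ35' : ‖σ‖ < 3 * r / 5 := by linarith
    have hevz : (fun σ' : Euc d →L[ℝ] Euc d => f (M σ', σ'))
        =ᶠ[nhds σ] (fun _ => (0 : Euc d)) := by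
      have hmem : Metric.ball (0 : Euc d →L[ℝ] Euc d) (3 * r / 5) ∈ nhds σ :=
        Metric.isOpen_ball.mem_nhds (by rw [Metric.mem_ball, dist_zero_right]; exact hσ35')
      filter_upwards [hmem] with σ' hσ'
      rw [Metric.mem_ball, dist_zero_right] at hσ'
      exact (hMprop σ' (le_of_lt hσ')).1
    have hinner : HasFDerivAt (fun σ' : Euc d →L[ℝ] Euc d =>
          ((M σ', σ') : Euc d × (Euc d →L[ℝ] Euc d)))
        (Dm.prod (ContinuousLinearMap.id ℝ (Euc d →L[ℝ] Euc d))) σ :=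
      hdm.hasFDerivAt.prodMk (hasFDerivAt_id σ)
    have hder : HasFDerivAt (fun σ' : Euc d →L[ℝ] Euc d => f (M σ', σ'))
        ((fderiv ℝ f (M σ, σ)).comp
          (Dm.prod (ContinuousLinearMap.id ℝ (Euc d →L[ℝ] Euc d)))) σ :=
      HasFDerivAt.comp (g := f)
        (f := fun σ' : Euc d →L[ℝ] Euc d => ((M σ', σ') : Euc d × (Euc d →L[ℝ] Euc d)))
        σ (hdiff (M σ, σ)).hasFDerivAt hinner
    have hz : (fderiv ℝ f (M σ, σ)).comp
        (Dm.prod (ContinuousLinearMap.id ℝ (Euc d →L[ℝ] Euc d))) = 0 := by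
      rw [← hder.fderiv, hevz.fderiv_eq]
      exact fderiv_const_apply 0
    refine ContinuousLinearMap.opNorm_le_bound _ zero_le_one fun v => ?_
    have hcomb : fderiv ℝ f (M σ, σ) ((Dm v, v) : Euc d × (Euc d →L[ℝ] Euc d)) = 0 := by
      have := congrFun (congrArg DFunLike.coe hz) v
      simpa [ContinuousLinearMap.comp_apply, ContinuousLinearMap.prod_apply] using this
    have hsplit : ((Dm v, v) : Euc d × (Euc d →L[ℝ] Euc d))
        = ((Dm v, 0) : Euc d × (Euc d →L[ℝ] Euc d))
          + (((0 : Euc d), v) : Euc d × (Euc d →L[ℝ] Euc d)) := by simp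
    have hAB : fderiv ℝ f (M σ, σ) ((Dm v, (0 : Euc d →L[ℝ] Euc d)) :
          Euc d × (Euc d →L[ℝ] Euc d))
        = - fderiv ℝ f (M σ, σ) (((0 : Euc d), v) : Euc d × (Euc d →L[ℝ] Euc d)) := by
      have h := hcomb
      rw [hsplit, map_add] at h
      exact eq_neg_of_add_eq_zero_left h
    have hBv : ‖fderiv ℝ f (M σ, σ) (((0 : Euc d), v) : Euc d × (Euc d →L[ℝ] Euc d))‖
        ≤ 1 / 4 * ‖v‖ := by
      have h := hDσ (M σ) σ hball
      have h1 := ((fderiv ℝ f (M σ, σ)).comp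
        (ContinuousLinearMap.inr ℝ (Euc d) (Euc d →L[ℝ] Euc d))).le_opNorm v
      have h2 : ((fderiv ℝ f (M σ, σ)).comp
          (ContinuousLinearMap.inr ℝ (Euc d) (Euc d →L[ℝ] Euc d))) v
          = fderiv ℝ f (M σ, σ) (((0 : Euc d), v) : Euc d × (Euc d →L[ℝ] Euc d)) := rfl
      rw [h2] at h1
      exact le_trans h1 (mul_le_mul_of_nonneg_right h (norm_nonneg v))
    have hTm : ‖(fderiv ℝ f (M σ, σ)).comp
        (ContinuousLinearMap.inl ℝ (Euc d) (Euc d →L[ℝ] Euc d))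
        - ContinuousLinearMap.id ℝ (Euc d)‖ ≤ 1 / 4 := hDm _ _ hball
    have hAx : ‖Dm v‖ - 1 / 4 * ‖Dm v‖
        ≤ ‖fderiv ℝ f (M σ, σ) ((Dm v, (0 : Euc d →L[ℝ] Euc d)) :
            Euc d × (Euc d →L[ℝ] Euc d))‖ := by
      set x := Dm v with hx
      have h1 : fderiv ℝ f (M σ, σ) ((x, (0 : Euc d →L[ℝ] Euc d)) :
            Euc d × (Euc d →L[ℝ] Euc d))
          = x + ((fderiv ℝ f (M σ, σ)).comp
              (ContinuousLinearMap.inl ℝ (Euc d) (Euc d →L[ℝ] Euc d))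
            - ContinuousLinearMap.id ℝ (Euc d)) x := by
        simp [ContinuousLinearMap.sub_apply, ContinuousLinearMap.comp_apply]
      have h2 : ‖((fderiv ℝ f (M σ, σ)).comp
              (ContinuousLinearMap.inl ℝ (Euc d) (Euc d →L[ℝ] Euc d))
            - ContinuousLinearMap.id ℝ (Euc d)) x‖ ≤ 1 / 4 * ‖x‖ :=
        le_trans (ContinuousLinearMap.le_opNorm _ _)
          (mul_le_mul_of_nonneg_right hTm (norm_nonneg x))
      have h3 := norm_add_le (x + ((fderiv ℝ f (M σ, σ)).comp
              (ContinuousLinearMap.inl ℝ (Euc d) (Euc d →L[ℝ] Euc d))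
            - ContinuousLinearMap.id ℝ (Euc d)) x)
        (- ((fderiv ℝ f (M σ, σ)).comp
              (ContinuousLinearMap.inl ℝ (Euc d) (Euc d →L[ℝ] Euc d))
            - ContinuousLinearMap.id ℝ (Euc d)) x)
      rw [add_neg_cancel_right, norm_neg] at h3
      rw [h1]
      linarith
    rw [hAB, norm_neg] at hAx
    have : ‖Dm v‖ ≤ 1 / 3 * ‖v‖ := by linarith
    nlinarith [norm_nonneg v, norm_nonneg (Dm v)]


end
end

section
/- Fix d ≥ 1 and an integer k ≥ 1. For all x, y ∈ ℝ^d and every index i ∈ {1, …, d} with x_i ≠ y_i, one has Σ_{γ : |γ| ≤ k−1} (1/γ!)·H_γ(x)·H_γ(y) = (x_i − y_i)^{−1} · Σ_{γ : |γ| = k−1} (1/γ!)·(H_{γ+e_i}(x)·H_γ(y) − H_{γ+e_i}(y)·H_γ(x)), where the sums run over multi-indices γ ∈ ℕ^d and e_i is the i-th standard basis multi-index. -/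
open MeasureTheory Real Set

noncomputable section

/-- The probabilists' Hermite polynomials: `H₀ = 1`, `H₁(t) = t`,
`H_{k+1}(t) = t H_k(t) − k H_{k−1}(t)`. -/
def hermiteP : ℕ → ℝ → ℝ
  | 0, _ => 1
  | 1, t => t
  | (k + 2), t => t * hermiteP (k + 1) t - (k + 1) * hermiteP k t

/-- Multivariate Hermite polynomial `H_γ(x) = ∏ⱼ H_{γⱼ}(xⱼ)` for a multi-index `γ`. -/
def hermiteMulti {d : ℕ} (γ : Fin d → ℕ) (x : Fin d → ℝ) : ℝ :=
  ∏ j, hermiteP (γ j) (x j)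

lemma hermiteP_succ (n : ℕ) (t : ℝ) :
    hermiteP (n + 1) t = t * hermiteP n t - n * hermiteP (n - 1) t := by
  cases n with
  | zero => simp [hermiteP]
  | succ m =>
    show hermiteP (m + 2) t = _
    rw [hermiteP]
    push_cast
    norm_num

lemma hermiteMulti_succ {d : ℕ} (γ : Fin d → ℕ) (x : Fin d → ℝ) (i : Fin d) :
    hermiteMulti (γ + Pi.single i 1) x
      = x i * hermiteMulti γ x - (γ i : ℝ) * hermiteMulti (γ - Pi.single i 1) x := by
  unfold hermiteMulti
  have split : ∀ g : Fin d → ℕ, (∏ j, hermiteP (g j) (x j))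
      = hermiteP (g i) (x i) * ∏ j ∈ Finset.univ.erase i, hermiteP (g j) (x j) :=
    fun g => (Finset.mul_prod_erase _ _ (Finset.mem_univ i)).symm
  rw [split (γ + Pi.single i 1), split γ, split (γ - Pi.single i 1)]
  have h1 : ∀ j ∈ Finset.univ.erase i,
      hermiteP ((γ + Pi.single i 1 : Fin d → ℕ) j) (x j) = hermiteP (γ j) (x j) := by
    intro j hj
    simp [Pi.single_eq_of_ne (Finset.mem_erase.mp hj).1]
  have h2 : ∀ j ∈ Finset.univ.erase i,
      hermiteP ((γ - Pi.single i 1 : Fin d → ℕ) j) (x j) = hermiteP (γ j) (x j) := by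
    intro j hj
    simp [Pi.single_eq_of_ne (Finset.mem_erase.mp hj).1]
  rw [Finset.prod_congr rfl h1, Finset.prod_congr rfl h2]
  have e1 : (γ + Pi.single i 1 : Fin d → ℕ) i = γ i + 1 := by simp
  have e2 : (γ - Pi.single i 1 : Fin d → ℕ) i = γ i - 1 := by simp
  rw [e1, e2, hermiteP_succ]
  ring

lemma sub_add_single {d : ℕ} (γ : Fin d → ℕ) (i : Fin d) (h : γ i ≠ 0) :
    γ - Pi.single i 1 + Pi.single i 1 = γ := by
  funext j
  by_cases hj : j = i
  · subst hj
    simp [Nat.sub_add_cancel (Nat.one_le_iff_ne_zero.mpr h)]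
  · simp [Pi.single_eq_of_ne hj]

lemma sum_single_add {d : ℕ} (δ : Fin d → ℕ) (i : Fin d) :
    ∑ j, (δ + Pi.single i 1 : Fin d → ℕ) j = (∑ j, δ j) + 1 := by
  simp [Finset.sum_add_distrib]

lemma sum_shift {d : ℕ} (i : Fin d) (m : ℕ) (f : (Fin d → ℕ) → ℝ)
    (hf : ∀ γ, γ i = 0 → f γ = 0) :
    ∑ γ ∈ Finset.Nat.antidiagonalTuple d (m + 1), f γ
      = ∑ δ ∈ Finset.Nat.antidiagonalTuple d m, f (δ + Pi.single i 1) := by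
  have h1 : ∑ γ ∈ Finset.Nat.antidiagonalTuple d (m + 1), f γ
      = ∑ γ ∈ (Finset.Nat.antidiagonalTuple d (m + 1)).filter (fun γ => γ i ≠ 0), f γ := by
    rw [Finset.sum_filter]
    refine Finset.sum_congr rfl fun γ _ => ?_
    by_cases h : γ i = 0 <;> simp [h, hf]
  rw [h1]
  refine Finset.sum_bij' (fun γ _ => γ - Pi.single i 1) (fun δ _ => δ + Pi.single i 1)
    ?_ ?_ ?_ ?_ ?_
  · intro γ hγ
    obtain ⟨hγm, hγi⟩ := Finset.mem_filter.mp hγ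
    rw [Finset.Nat.mem_antidiagonalTuple] at hγm ⊢
    have := sum_single_add (γ - Pi.single i 1) i
    rw [sub_add_single γ i hγi, hγm] at this
    exact Nat.succ_injective this.symm
  · intro δ hδ
    rw [Finset.Nat.mem_antidiagonalTuple] at hδ
    refine Finset.mem_filter.mpr ⟨?_, ?_⟩
    · rw [Finset.Nat.mem_antidiagonalTuple, sum_single_add, hδ]
    · show (δ + Pi.single i 1 : Fin d → ℕ) i ≠ 0
      simp
  · intro γ hγ
    exact sub_add_single γ i (Finset.mem_filter.mp hγ).2
  · intro δ _
    funext j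
    by_cases hj : j = i
    · subst hj; simp
    · simp [Pi.single_eq_of_ne hj]
  · intro γ hγ
    rw [sub_add_single γ i (Finset.mem_filter.mp hγ).2]

lemma fact_shift {d : ℕ} (δ : Fin d → ℕ) (i : Fin d) :
    (∏ j, Nat.factorial ((δ + Pi.single i 1 : Fin d → ℕ) j))
      = (δ i + 1) * ∏ j, Nat.factorial (δ j) := by
  have split : ∀ g : Fin d → ℕ, (∏ j, Nat.factorial (g j))
      = Nat.factorial (g i) * ∏ j ∈ Finset.univ.erase i, Nat.factorial (g j) :=
    fun g => (Finset.mul_prod_erase _ _ (Finset.mem_univ i)).symm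
  rw [split (δ + Pi.single i 1), split δ]
  have h1 : ∀ j ∈ Finset.univ.erase i,
      Nat.factorial ((δ + Pi.single i 1 : Fin d → ℕ) j) = Nat.factorial (δ j) := by
    intro j hj
    simp [Pi.single_eq_of_ne (Finset.mem_erase.mp hj).1]
  rw [Finset.prod_congr rfl h1]
  have e1 : (δ + Pi.single i 1 : Fin d → ℕ) i = δ i + 1 := by simp
  rw [e1, Nat.factorial_succ, mul_assoc]

def Tsum (d : ℕ) (i : Fin d) (x y : Fin d → ℝ) (m : ℕ) : ℝ :=
  ∑ γ ∈ Finset.Nat.antidiagonalTuple d m,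
    (1 / (∏ j, Nat.factorial (γ j) : ℝ)) *
      (hermiteMulti (γ + Pi.single i 1) x * hermiteMulti γ y -
        hermiteMulti (γ + Pi.single i 1) y * hermiteMulti γ x)

def Ssum (d : ℕ) (x y : Fin d → ℝ) (m : ℕ) : ℝ :=
  ∑ γ ∈ Finset.Nat.antidiagonalTuple d m,
    (1 / (∏ j, Nat.factorial (γ j) : ℝ)) * (hermiteMulti γ x * hermiteMulti γ y)

lemma base_case (d : ℕ) (i : Fin d) (x y : Fin d → ℝ) :
    (x i - y i) * Ssum d x y 0 = Tsum d i x y 0 := by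
  have hx := hermiteMulti_succ (0 : Fin d → ℕ) x i
  have hy := hermiteMulti_succ (0 : Fin d → ℕ) y i
  have h0 : hermiteMulti (0 : Fin d → ℕ) x = 1 := by simp [hermiteMulti, hermiteP]
  have h0' : hermiteMulti (0 : Fin d → ℕ) y = 1 := by simp [hermiteMulti, hermiteP]
  simp only [Ssum, Tsum, Finset.Nat.antidiagonalTuple_zero_right, Finset.sum_singleton,
    zero_add]
  simp only [zero_add] at hx hy
  rw [hx, hy, h0, h0']
  simp

lemma key_step (d : ℕ) (i : Fin d) (x y : Fin d → ℝ) (n : ℕ) :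
    (x i - y i) * Ssum d x y (n + 1) = Tsum d i x y (n + 1) - Tsum d i x y n := by
  have termwise : ∀ γ : Fin d → ℕ,
      (x i - y i) * ((1 / (∏ j, Nat.factorial (γ j) : ℝ)) *
          (hermiteMulti γ x * hermiteMulti γ y))
        = (1 / (∏ j, Nat.factorial (γ j) : ℝ)) *
            (hermiteMulti (γ + Pi.single i 1) x * hermiteMulti γ y -
              hermiteMulti (γ + Pi.single i 1) y * hermiteMulti γ x)
          + ((γ i : ℝ) / (∏ j, Nat.factorial (γ j) : ℝ)) *
            (hermiteMulti (γ - Pi.single i 1) x * hermiteMulti γ y -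
              hermiteMulti (γ - Pi.single i 1) y * hermiteMulti γ x) := by
    intro γ
    rw [hermiteMulti_succ γ x i, hermiteMulti_succ γ y i]
    ring
  have hsplit : (x i - y i) * Ssum d x y (n + 1)
      = Tsum d i x y (n + 1)
        + ∑ γ ∈ Finset.Nat.antidiagonalTuple d (n + 1),
            ((γ i : ℝ) / (∏ j, Nat.factorial (γ j) : ℝ)) *
              (hermiteMulti (γ - Pi.single i 1) x * hermiteMulti γ y -
                hermiteMulti (γ - Pi.single i 1) y * hermiteMulti γ x) := by
    rw [Ssum, Finset.mul_sum, Tsum, ← Finset.sum_add_distrib]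
    exact Finset.sum_congr rfl fun γ _ => termwise γ
  rw [hsplit]
  have hshift : ∑ γ ∈ Finset.Nat.antidiagonalTuple d (n + 1),
        ((γ i : ℝ) / (∏ j, Nat.factorial (γ j) : ℝ)) *
          (hermiteMulti (γ - Pi.single i 1) x * hermiteMulti γ y -
            hermiteMulti (γ - Pi.single i 1) y * hermiteMulti γ x)
      = - Tsum d i x y n := by
    rw [sum_shift i n _ (fun γ hγ => by simp [hγ]), Tsum, ← Finset.sum_neg_distrib]
    refine Finset.sum_congr rfl fun δ hδ => ?_
    have hsub : (δ + Pi.single i 1 - Pi.single i 1 : Fin d → ℕ) = δ := by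
      funext j
      by_cases hj : j = i
      · subst hj; simp
      · simp [Pi.single_eq_of_ne hj]
    have hi : ((δ + Pi.single i 1 : Fin d → ℕ) i : ℝ) = (δ i : ℝ) + 1 := by
      push_cast [Pi.add_apply, Pi.single_eq_same]
      ring
    have hfact : (∏ j, (Nat.factorial ((δ + Pi.single i 1 : Fin d → ℕ) j) : ℝ))
        = ((δ i : ℝ) + 1) * ∏ j, (Nat.factorial (δ j) : ℝ) := by
      rw [← Nat.cast_prod, ← Nat.cast_prod, fact_shift]
      push_cast
      ring
    rw [hsub, hi, hfact]
    have hne : ((δ i : ℝ) + 1) ≠ 0 := by positivity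
    have hfne : ((∏ j, Nat.factorial (δ j) : ℝ)) ≠ 0 := by
      push_cast
      positivity
    field_simp
    ring
  rw [hshift]
  ring

lemma telescope (d : ℕ) (i : Fin d) (x y : Fin d → ℝ) (n : ℕ) :
    (x i - y i) * ∑ m ∈ Finset.range (n + 1), Ssum d x y m = Tsum d i x y n := by
  induction n with
  | zero => simpa using base_case d i x y
  | succ n ih =>
    rw [Finset.sum_range_succ, mul_add, ih, key_step]
    ring
/-- **Hermite kernel identity** (Lemma C.2): for `x_i ≠ y_i`,
`Σ_{|γ| ≤ k−1} (1/γ!) H_γ(x) H_γ(y)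
  = (x_i − y_i)⁻¹ Σ_{|γ| = k−1} (1/γ!) (H_{γ+e_i}(x) H_γ(y) − H_{γ+e_i}(y) H_γ(x))`. -/
theorem hermite_kernel_identity
    (d k : ℕ) (hd : 1 ≤ d) (hk : 1 ≤ k)
    (x y : Fin d → ℝ) (i : Fin d) (hne : x i ≠ y i) :
    (∑ m ∈ Finset.range k, ∑ γ ∈ Finset.Nat.antidiagonalTuple d m,
        (1 / (∏ j, Nat.factorial (γ j) : ℝ)) * (hermiteMulti γ x * hermiteMulti γ y)) =
      (x i - y i)⁻¹ * ∑ γ ∈ Finset.Nat.antidiagonalTuple d (k - 1),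
        (1 / (∏ j, Nat.factorial (γ j) : ℝ)) *
          (hermiteMulti (γ + Pi.single i 1) x * hermiteMulti γ y -
            hermiteMulti (γ + Pi.single i 1) y * hermiteMulti γ x) := by
  obtain ⟨n, rfl⟩ : ∃ n, k = n + 1 := ⟨k - 1, (Nat.succ_pred_eq_of_pos hk).symm⟩
  have hc : x i - y i ≠ 0 := sub_ne_zero.mpr hne
  simp only [Nat.add_sub_cancel]
  rw [eq_inv_mul_iff_mul_eq₀ hc]
  exact telescope d i x y n

end
end

section
/- For every p > 0 there exists a constant C_p > 0 depending only on p such that for all integers d ≥ 1, all b > 0, and all R ≥ C_p·(max(1, 1/b))², the integral I(R, p, b) = (2π)^{−d/2} · ∫_{{x ∈ ℝ^d : ∥x∥ ≥ R√d}} ∥x∥^p · e^{−b·√d·∥x∥} dx satisfies I(R, p, b) ≤ C_p · e^{−R·b·d/2}. -/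
open MeasureTheory Real Set

noncomputable section

lemma aux_rpow_le_exp {p c t : ℝ} (hp : 0 < p) (hc : 0 < c) (ht : 0 ≤ t) :
    t ^ p ≤ (8 * p / c) ^ p * Real.exp (c * t / 8) := by
  have hy : (0:ℝ) ≤ c * t / (8 * p) := by positivity
  have h1 : c * t / (8 * p) ≤ Real.exp (c * t / (8 * p)) :=
    le_trans (by linarith) (Real.add_one_le_exp _)
  have h2 : (c * t / (8 * p)) ^ p ≤ Real.exp (c * t / 8) := by
    calc (c * t / (8 * p)) ^ p ≤ (Real.exp (c * t / (8 * p))) ^ p :=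
          Real.rpow_le_rpow hy h1 hp.le
    _ = Real.exp (c * t / (8 * p) * p) := by
          rw [← Real.exp_log (Real.rpow_pos_of_pos (Real.exp_pos _) p),
            Real.log_rpow (Real.exp_pos _), Real.log_exp, mul_comm]
    _ = Real.exp (c * t / 8) := by congr 1; field_simp
  calc t ^ p = ((8 * p / c) * (c * t / (8 * p))) ^ p := by
        congr 1; field_simp
  _ = (8 * p / c) ^ p * (c * t / (8 * p)) ^ p :=
        Real.mul_rpow (by positivity) hy
  _ ≤ (8 * p / c) ^ p * Real.exp (c * t / 8) :=
        mul_le_mul_of_nonneg_left h2 (by positivity)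

lemma aux_sum_abs_le {d : ℕ} (x : EuclideanSpace ℝ (Fin d)) :
    ∑ i, |x i| ≤ Real.sqrt d * ‖x‖ := by
  have h1 : (∑ i, |x i|) ^ 2 ≤ (d : ℝ) * ∑ i, |x i| ^ 2 := by
    simpa using sq_sum_le_card_mul_sum_sq (s := Finset.univ) (f := fun i => |x i|)
  have h2 : ‖x‖ = Real.sqrt (∑ i, |x i| ^ 2) := by
    rw [EuclideanSpace.norm_eq]; simp [Real.norm_eq_abs]
  calc ∑ i, |x i| = Real.sqrt ((∑ i, |x i|) ^ 2) :=
        (Real.sqrt_sq (by positivity)).symm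
  _ ≤ Real.sqrt ((d : ℝ) * ∑ i, |x i| ^ 2) := Real.sqrt_le_sqrt h1
  _ = Real.sqrt d * Real.sqrt (∑ i, |x i| ^ 2) := Real.sqrt_mul (by positivity) _
  _ = Real.sqrt d * ‖x‖ := by rw [h2]

lemma aux_integrable_exp_abs {c : ℝ} (hc : 0 < c) :
    Integrable (fun t : ℝ => Real.exp (-(c * |t|))) := by
  have h1 : IntegrableOn (fun t : ℝ => Real.exp (-(c * |t|))) (Ioi 0) := by
    refine (exp_neg_integrableOn_Ioi 0 hc).congr_fun (fun t ht => ?_) measurableSet_Ioi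
    rw [abs_of_pos ht]; ring_nf
  have h2 : IntegrableOn (fun t : ℝ => Real.exp (-(c * |t|))) (Iic 0) := by
    have m : MeasurableEmbedding fun x : ℝ => -x := (Homeomorph.neg ℝ).measurableEmbedding
    rw [← Measure.map_neg_eq_self (volume : Measure ℝ), m.integrableOn_map_iff]
    have hpre : (fun x : ℝ => -x) ⁻¹' Iic 0 = Ici 0 := by ext y; simp
    simp_rw [Function.comp_def, abs_neg, hpre]
    exact (integrableOn_Ici_iff_integrableOn_Ioi).mpr h1
  have h := h2.union h1
  rwa [Iic_union_Ioi, integrableOn_univ] at h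

lemma aux_integral_exp_abs {c : ℝ} (hc : 0 < c) :
    ∫ t : ℝ, Real.exp (-(c * |t|)) = 2 / c := by
  have h0 : ∫ t : ℝ in Ioi 0, Real.exp (-(c * t)) = c⁻¹ := by
    have h := integral_comp_mul_left_Ioi (fun u : ℝ => Real.exp (-u)) 0 hc
    rw [mul_zero, integral_exp_neg_Ioi, neg_zero, Real.exp_zero, smul_eq_mul, mul_one] at h
    exact h
  have h := integral_comp_abs (f := fun t : ℝ => Real.exp (-(c * t)))
  rw [h0] at h
  rw [h]; ring

lemma aux_g0 {d : ℕ} {c : ℝ} (hc : 0 < c) :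
    Integrable (fun x : EuclideanSpace ℝ (Fin d) => Real.exp (-(c * ∑ i, |x i|))) ∧
      ∫ x : EuclideanSpace ℝ (Fin d), Real.exp (-(c * ∑ i, |x i|)) = (2 / c) ^ d := by
  have hpres := EuclideanSpace.volume_preserving_symm_measurableEquiv_toLp (Fin d)
  have hemb := (MeasurableEquiv.toLp 2 (Fin d → ℝ)).symm.measurableEmbedding
  set G : (Fin d → ℝ) → ℝ := fun y => ∏ i, Real.exp (-(c * |y i|)) with hG
  have hG_int : Integrable G := Integrable.fintype_prod (fun _ => aux_integrable_exp_abs hc)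
  have hG_val : ∫ y : Fin d → ℝ, G y = (2 / c) ^ d := by
    rw [hG]; beta_reduce; rw [integral_fintype_prod_volume_eq_pow (ι := Fin d) (fun t : ℝ => Real.exp (-(c * |t|))),
      aux_integral_exp_abs hc, Fintype.card_fin]
  have hcomp : (fun x : EuclideanSpace ℝ (Fin d) => Real.exp (-(c * ∑ i, |x i|))) =
      G ∘ (MeasurableEquiv.toLp 2 (Fin d → ℝ)).symm := by
    funext x
    simp only [Function.comp_apply, hG]
    rw [← Real.exp_sum]
    congr 1
    rw [Finset.mul_sum, ← Finset.sum_neg_distrib]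
    rfl
  constructor
  · rw [hcomp]
    exact (hpres.integrable_comp_emb hemb).mpr hG_int
  · rw [hcomp, ← hG_val]
    exact hpres.integral_comp hemb G


set_option maxHeartbeats 2000000 in
/-- **Gaussian-normalized tail integral bound** (Lemma 4.4 / Lemma E.3): for every `p > 0`
there is `C_p > 0` such that for all `d ≥ 1`, `b > 0` and `R ≥ C_p (max 1 (1/b))²`,
`(2π)^{-d/2} ∫_{∥x∥ ≥ R√d} ∥x∥^p e^{-b√d∥x∥} dx ≤ C_p e^{-Rbd/2}`. -/
theorem tail_integral_bound :
    ∀ p : ℝ, 0 < p → ∃ Cp : ℝ, 0 < Cp ∧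
      ∀ (d : ℕ) (b R : ℝ), 1 ≤ d → 0 < b → Cp * (max 1 b⁻¹) ^ 2 ≤ R →
        (2 * π) ^ (-(d : ℝ) / 2) *
            ∫ x in {x : EuclideanSpace ℝ (Fin d) | R * Real.sqrt d ≤ ‖x‖},
              ‖x‖ ^ p * Real.exp (-b * Real.sqrt d * ‖x‖) ≤
          Cp * Real.exp (-R * b * d / 2) := by
  intro p hp
  have hCp0 : (0:ℝ) < (8*p)^p + (8*p + 64) := by positivity
  refine ⟨(8*p)^p + (8*p + 64), hCp0, ?_⟩
  intro d b R hd hb hR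
  set Cp : ℝ := (8*p)^p + (8*p + 64) with hCpdef
  have hCp1 : 8*p + 64 ≤ Cp := by
    rw [hCpdef]; nlinarith [Real.rpow_pos_of_pos (by positivity : (0:ℝ) < 8*p) p]
  set M : ℝ := max 1 b⁻¹ with hMdef
  have hM1 : (1:ℝ) ≤ M := le_max_left _ _
  have hM0 : (0:ℝ) < M := lt_of_lt_of_le one_pos hM1
  have hbM : b⁻¹ ≤ M := le_max_right _ _
  have hd1 : (1:ℝ) ≤ (d:ℝ) := by exact_mod_cast hd
  have hsd1 : (1:ℝ) ≤ Real.sqrt d := by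
    rw [show (1:ℝ) = Real.sqrt 1 from (Real.sqrt_one).symm]
    exact Real.sqrt_le_sqrt hd1
  have hsd0 : (0:ℝ) < Real.sqrt d := one_pos.trans_le hsd1
  set c : ℝ := b * Real.sqrt d with hcdef
  have hc0 : 0 < c := mul_pos hb hsd0
  have hbc : b ≤ c := le_mul_of_one_le_right hb.le hsd1
  have hcM : c⁻¹ ≤ M := le_trans (inv_anti₀ hb hbc) hbM
  have hMb : 1 ≤ M * b := by
    rcases le_total b 1 with h | h
    · have h1 : b⁻¹ * b ≤ M * b := mul_le_mul_of_nonneg_right hbM hb.le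
      rwa [inv_mul_cancel₀ hb.ne'] at h1
    · nlinarith
  have hR0 : 0 < R := lt_of_lt_of_le (by positivity) hR
  have hRbM : Cp * M ≤ R * b := by nlinarith
  set S := {x : EuclideanSpace ℝ (Fin d) | R * Real.sqrt d ≤ ‖x‖} with hSdef
  have hS_meas : MeasurableSet S :=
    (isClosed_le continuous_const continuous_norm).measurableSet
  set K0 : ℝ := (8*p)^p * M^p with hK0
  have hK00 : 0 < K0 := by
    rw [hK0]; positivity
  set g₀ : EuclideanSpace ℝ (Fin d) → ℝ :=
    fun x => Real.exp (-(b/4 * ∑ i, |x i|)) with hg0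
  obtain ⟨hg_int, hg_val⟩ := aux_g0 (d := d) (c := b/4) (by positivity)
  have hpt : ∀ x : EuclideanSpace ℝ (Fin d),
      ‖x‖^p * Real.exp (-b * Real.sqrt d * ‖x‖) ≤
        K0 * (Real.exp (-(5/8*(c*‖x‖))) * g₀ x) := by
    intro x
    have hn : (0:ℝ) ≤ ‖x‖ := norm_nonneg x
    have s1 : ‖x‖^p ≤ (8*p/c)^p * Real.exp (c*‖x‖/8) := aux_rpow_le_exp hp hc0 hn
    have s2 : (8*p/c)^p ≤ K0 := by
      rw [hK0, div_eq_mul_inv, Real.mul_rpow (by positivity) (by positivity)]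
      exact mul_le_mul_of_nonneg_left
        (Real.rpow_le_rpow (by positivity) hcM hp.le) (by positivity)
    have s3 : Real.exp (-(1/4*(c*‖x‖))) ≤ g₀ x := by
      rw [hg0]
      apply Real.exp_le_exp.mpr
      have h5 := aux_sum_abs_le x
      have h4 : b/4 * (∑ i, |x i|) ≤ b/4 * (Real.sqrt d * ‖x‖) :=
        mul_le_mul_of_nonneg_left h5 (by positivity)
      rw [hcdef]; nlinarith
    calc ‖x‖^p * Real.exp (-b * Real.sqrt d * ‖x‖)
        ≤ ((8*p/c)^p * Real.exp (c*‖x‖/8)) * Real.exp (-b * Real.sqrt d * ‖x‖) :=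
          mul_le_mul_of_nonneg_right s1 (Real.exp_pos _).le
      _ = (8*p/c)^p * (Real.exp (-(5/8*(c*‖x‖))) * Real.exp (-(1/4*(c*‖x‖)))) := by
          rw [mul_assoc, ← Real.exp_add, ← Real.exp_add]
          congr 2
          rw [hcdef]; ring
      _ ≤ K0 * (Real.exp (-(5/8*(c*‖x‖))) * g₀ x) := by
          refine mul_le_mul s2 ?_ (by positivity) hK00.le
          exact mul_le_mul_of_nonneg_left s3 (Real.exp_pos _).le
  have hf_cont : Continuous (fun x : EuclideanSpace ℝ (Fin d) =>
      ‖x‖^p * Real.exp (-b * Real.sqrt d * ‖x‖)) := by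
    apply Continuous.mul
    · exact continuous_norm.rpow_const (fun x => Or.inr hp.le)
    · exact (continuous_const.mul continuous_norm).rexp
  have hf_nonneg : ∀ x : EuclideanSpace ℝ (Fin d),
      0 ≤ ‖x‖^p * Real.exp (-b * Real.sqrt d * ‖x‖) := fun x => by positivity
  have hf_int : Integrable (fun x : EuclideanSpace ℝ (Fin d) =>
      ‖x‖^p * Real.exp (-b * Real.sqrt d * ‖x‖)) := by
    apply Integrable.mono' (hg_int.const_mul K0) hf_cont.aestronglyMeasurable
    refine Filter.Eventually.of_forall (fun x => ?_)
    rw [Real.norm_eq_abs, abs_of_nonneg (hf_nonneg x)]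
    calc ‖x‖^p * Real.exp (-b * Real.sqrt d * ‖x‖)
        ≤ K0 * (Real.exp (-(5/8*(c*‖x‖))) * g₀ x) := hpt x
    _ ≤ K0 * (1 * g₀ x) := by
        refine mul_le_mul_of_nonneg_left ?_ hK00.le
        refine mul_le_mul_of_nonneg_right ?_ (Real.exp_pos _).le
        refine Real.exp_le_one_iff.mpr ?_
        have : (0:ℝ) ≤ 5/8*(c*‖x‖) := by positivity
        linarith
    _ = K0 * g₀ x := by rw [one_mul]
  set K1 : ℝ := K0 * Real.exp (-(5/8*(R*b*d))) with hK1
  have hK10 : 0 < K1 := by rw [hK1]; positivity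
  have hptS : ∀ x ∈ S, ‖x‖^p * Real.exp (-b * Real.sqrt d * ‖x‖) ≤ K1 * g₀ x := by
    intro x hx
    have hx' : R * Real.sqrt d ≤ ‖x‖ := hx
    have hdd : Real.sqrt d * Real.sqrt d = (d:ℝ) :=
      Real.mul_self_sqrt (Nat.cast_nonneg d)
    have hT : R * b * d ≤ c * ‖x‖ := by
      have h1 : c * (R * Real.sqrt d) ≤ c * ‖x‖ :=
        mul_le_mul_of_nonneg_left hx' hc0.le
      have h2 : c * (R * Real.sqrt d) = R * b * d := by
        rw [hcdef, show b * Real.sqrt d * (R * Real.sqrt d) =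
          R * b * (Real.sqrt d * Real.sqrt d) from by ring, hdd]
      linarith
    calc ‖x‖^p * Real.exp (-b * Real.sqrt d * ‖x‖)
        ≤ K0 * (Real.exp (-(5/8*(c*‖x‖))) * g₀ x) := hpt x
    _ ≤ K0 * (Real.exp (-(5/8*(R*b*d))) * g₀ x) := by
        refine mul_le_mul_of_nonneg_left ?_ hK00.le
        refine mul_le_mul_of_nonneg_right ?_ (Real.exp_pos _).le
        exact Real.exp_le_exp.mpr (by nlinarith)
    _ = K1 * g₀ x := by rw [hK1]; ring
  have hInt1 : (∫ x in S, ‖x‖^p * Real.exp (-b * Real.sqrt d * ‖x‖)) ≤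
      ∫ x in S, K1 * g₀ x :=
    setIntegral_mono_on hf_int.integrableOn ((hg_int.const_mul K1)).integrableOn hS_meas hptS
  have hInt2 : (∫ x in S, K1 * g₀ x) ≤ ∫ x : EuclideanSpace ℝ (Fin d), K1 * g₀ x :=
    setIntegral_le_integral (hg_int.const_mul K1)
      (Filter.Eventually.of_forall (fun x => by rw [hg0]; positivity))
  have hInt3 : (∫ x : EuclideanSpace ℝ (Fin d), K1 * g₀ x) = K1 * (2/(b/4))^d := by
    rw [integral_const_mul, hg_val]
  -- final numeric bound
  have hexp_split : Real.exp (-(5/8*(R*b*d))) =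
      Real.exp (-(R*b*d/2)) * Real.exp (-(R*b*d/8)) := by
    rw [← Real.exp_add]; ring_nf
  have hcore : K0 * (2/(b/4))^d * Real.exp (-(R*b*d/8)) ≤ Cp := by
    have e1 : M^p ≤ Real.exp (M*p) := by
      calc M^p ≤ (Real.exp M)^p :=
            Real.rpow_le_rpow hM0.le (by linarith [Real.add_one_le_exp M]) hp.le
      _ = Real.exp (M*p) := (Real.exp_mul M p).symm
    have e2 : (2/(b/4))^d ≤ Real.exp (8*M*d) := by
      have h1 : (2:ℝ)/(b/4) = 8 * b⁻¹ := by field_simp; ring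
      have h2 : (8:ℝ) * b⁻¹ ≤ 8*M := by linarith
      have h3 : (8:ℝ)*M ≤ Real.exp (8*M) := by linarith [Real.add_one_le_exp (8*M)]
      calc (2/(b/4))^d ≤ (Real.exp (8*M))^d := by
            apply pow_le_pow_left₀ (by positivity)
            rw [h1]; linarith
      _ = Real.exp (8*M*d) := by
            rw [← Real.exp_nat_mul]; ring_nf
    have e3 : Real.exp (-(R*b*d/8)) ≤ Real.exp (-(Cp*M*d/8)) := by
      apply Real.exp_le_exp.mpr
      have h9 : Cp * M * (d:ℝ) ≤ R * b * (d:ℝ) :=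
        mul_le_mul_of_nonneg_right hRbM (Nat.cast_nonneg d)
      clear_value Cp M
      linarith
    calc K0 * (2/(b/4))^d * Real.exp (-(R*b*d/8))
        ≤ ((8*p)^p * Real.exp (M*p)) * Real.exp (8*M*d) * Real.exp (-(Cp*M*d/8)) := by
          refine mul_le_mul ?_ e3 (Real.exp_pos _).le (by positivity)
          refine mul_le_mul ?_ e2 (by positivity) (by positivity)
          rw [hK0]
          exact mul_le_mul_of_nonneg_left e1 (by positivity)
    _ = (8*p)^p * Real.exp (M*p + 8*M*d - Cp*M*d/8) := by
          rw [mul_assoc, ← Real.exp_add, mul_assoc, ← Real.exp_add]; ring_nf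
    _ ≤ (8*p)^p * 1 := by
          refine mul_le_mul_of_nonneg_left ?_ (by positivity)
          refine Real.exp_le_one_iff.mpr ?_
          clear_value Cp M
          nlinarith [mul_nonneg (mul_nonneg hM0.le hp.le) (sub_nonneg.mpr hd1),
            mul_nonneg (mul_nonneg hM0.le (Nat.cast_nonneg d : (0:ℝ) ≤ d))
              (sub_nonneg.mpr hCp1)]
    _ ≤ Cp := by rw [hCpdef]; nlinarith
  have hfinal : K1 * (2/(b/4))^d ≤ Cp * Real.exp (-R*b*d/2) := by
    have hEq : K1 * (2/(b/4))^d =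
        (K0 * (2/(b/4))^d * Real.exp (-(R*b*d/8))) * Real.exp (-(R*b*d/2)) := by
      rw [hK1, hexp_split]; ring
    rw [hEq, show -R*b*(d:ℝ)/2 = -(R*b*d/2) by ring]
    exact mul_le_mul_of_nonneg_right hcore (Real.exp_pos _).le
  have hpi : (1:ℝ) ≤ 2*π := by nlinarith [Real.pi_gt_three]
  have h2pi : (2*π)^(-(d:ℝ)/2) ≤ 1 :=
    Real.rpow_le_one_of_one_le_of_nonpos hpi
      (by have h9 : (0:ℝ) ≤ (d:ℝ) := Nat.cast_nonneg d; linarith)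
  have hIS : 0 ≤ ∫ x in S, ‖x‖^p * Real.exp (-b * Real.sqrt d * ‖x‖) :=
    setIntegral_nonneg hS_meas (fun x _ => hf_nonneg x)
  calc (2 * π) ^ (-(d : ℝ) / 2) *
        ∫ x in S, ‖x‖ ^ p * Real.exp (-b * Real.sqrt d * ‖x‖)
      ≤ 1 * ∫ x in S, ‖x‖ ^ p * Real.exp (-b * Real.sqrt d * ‖x‖) :=
        mul_le_mul_of_nonneg_right h2pi hIS
  _ = ∫ x in S, ‖x‖ ^ p * Real.exp (-b * Real.sqrt d * ‖x‖) := one_mul _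
  _ ≤ K1 * (2/(b/4))^d := by rw [← hInt3]; exact le_trans hInt1 hInt2
  _ ≤ Cp * Real.exp (-R*b*d/2) := hfinal


end
end
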